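/- arXiv:1504.01450 — 2 statements merged into one kernel-verified Lean document; each statement's English description precedes it below -/
import Mathlib

section
/- Let S = k[T_1,...,T_n], n ≥ 3, and R = S/I(P_n) where I(P_n) = (T_1T_2, T_2T_3, ..., T_{n-1}T_n) is the edge ideal of the n-path. For a squarefree vector v ∈ N^n, the multigraded deviation ε_v(R) equals 1 if Supp(v) is an interval and equals 0 otherwise. -/
open MvPolynomial

/-- Interval `{a, a+1, ..., a+b}` (in 0-based indexing for `{1,...,n}`). -/
def IsInterval {n : ℕ} (A : Finset (Fin n)) : Prop :=
  ∃ a b : ℕ, A.image Fin.val = Finset.Icc a (a + b)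

/-- The edge ideal of the `n`-path. -/
noncomputable def pathIdeal (K : Type*) [Field K] (n : ℕ) :
    Ideal (MvPolynomial (Fin n) K) :=
  Ideal.span {m | ∃ i j : Fin n, (j : ℕ) = (i : ℕ) + 1 ∧ m = X i * X j}

/-- The multigraded Hilbert function of `R = S/I`: the dimension of the multidegree-`v`
component of the quotient (the span of the image of the monomial `T^v`). -/
noncomputable def hilbF (K : Type*) [Field K] {n : ℕ}
    (I : Ideal (MvPolynomial (Fin n) K)) (v : Fin n →₀ ℕ) : ℕ :=
  Module.finrank K
    ((Submodule.span K {monomial v (1 : K)}).map (Ideal.Quotient.mkₐ K I).toLinearMap)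

/-- The multigraded Hilbert series `HS_R(ξ)` of `R = S/I` as a multivariate power
series over `ℤ`. -/
noncomputable def hilbSeries (K : Type*) [Field K] {n : ℕ}
    (I : Ideal (MvPolynomial (Fin n) K)) : MvPowerSeries (Fin n) ℤ :=
  fun v => (hilbF K I v : ℤ)

/-- `ε` is the family of multigraded deviations `ε_v = ε_{‖v‖,v}` of the (Koszul, since
`I` is a quadratic monomial ideal) algebra `R = S/I`: it is characterized by the
specialization at `z = -1` of the infinite product expansion of the multigraded Poincaré
series, namely
`Π_{‖w‖ odd} (1-ξ^w)^{ε_w} · HS_R(ξ) = Π_{‖w‖ even} (1-ξ^w)^{ε_w}`,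
read off coefficientwise (in multidegree `v` only factors with `w ≤ v` contribute). -/
def IsMultigradedDeviations (K : Type*) [Field K] {n : ℕ}
    (I : Ideal (MvPolynomial (Fin n) K)) (ε : (Fin n →₀ ℕ) → ℕ) : Prop :=
  ∀ v : Fin n →₀ ℕ,
    MvPowerSeries.coeff (R := ℤ) v
      ((∏ w ∈ (Finset.Iic v).filter
            (fun w => w ≠ 0 ∧ (w.sum fun _ m => m) % 2 = 1),
          (1 - MvPowerSeries.monomial (R := ℤ) w 1) ^ ε w) * hilbSeries K I) =
    MvPowerSeries.coeff (R := ℤ) v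
      (∏ w ∈ (Finset.Iic v).filter
            (fun w => w ≠ 0 ∧ (w.sum fun _ m => m) % 2 = 0),
          (1 - MvPowerSeries.monomial (R := ℤ) w 1) ^ ε w)

set_option maxHeartbeats 1000000

open Finset MvPowerSeries

set_option maxHeartbeats 1000000

namespace PathDev


open scoped Classical

variable {n : ℕ}

noncomputable def chi (B : Finset (Fin n)) : Fin n →₀ ℕ :=
  Finsupp.indicator B (fun _ _ => 1)

lemma chi_apply (B : Finset (Fin n)) (i : Fin n) :
    chi B i = if i ∈ B then 1 else 0 := by
  classical
  simp [chi, Finsupp.indicator_apply]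

lemma chi_support (B : Finset (Fin n)) : (chi B).support = B := by
  ext i
  rw [Finsupp.mem_support_iff, chi_apply]
  split <;> simp_all

lemma chi_inj : Function.Injective (chi (n := n)) := by
  intro B C h
  have := congrArg Finsupp.support h
  simpa [chi_support] using this

lemma chi_le {B C : Finset (Fin n)} : chi B ≤ chi C ↔ B ⊆ C := by
  constructor
  · intro h i hi
    have := (Finsupp.le_def.1 h) i
    rw [chi_apply, chi_apply] at this
    by_contra hc
    simp [hi, hc] at this
  · intro h
    rw [Finsupp.le_def]
    intro i
    rw [chi_apply, chi_apply]
    by_cases hi : i ∈ B <;> simp [hi, h]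
    · simp [h hi]

lemma chi_eq_zero {B : Finset (Fin n)} : chi B = 0 ↔ B = ∅ := by
  constructor
  · intro h; have := congrArg Finsupp.support h; simpa [chi_support] using this
  · rintro rfl; ext i; simp [chi_apply]

lemma eq_chi_of_le {w : Fin n →₀ ℕ} {A : Finset (Fin n)} (h : w ≤ chi A) :
    w = chi w.support ∧ w.support ⊆ A := by
  have hle : ∀ i, w i ≤ chi A i := Finsupp.le_def.1 h
  constructor
  · ext i
    rw [chi_apply]
    by_cases hi : i ∈ w.support
    · have h1 : w i ≠ 0 := Finsupp.mem_support_iff.1 hi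
      have h2 := hle i
      rw [chi_apply] at h2
      split at h2
      · simp [hi]; omega
      · omega
    · simp [Finsupp.notMem_support_iff.1 hi, hi]
  · intro i hi
    have h1 : w i ≠ 0 := Finsupp.mem_support_iff.1 hi
    have h2 := hle i
    rw [chi_apply] at h2
    by_contra hc
    simp [hc] at h2
    omega

lemma chi_sdiff {B A : Finset (Fin n)} (h : B ⊆ A) : chi A - chi B = chi (A \ B) := by
  ext i
  rw [Finsupp.tsub_apply, chi_apply, chi_apply, chi_apply]
  by_cases hB : i ∈ B
  · simp [hB, h hB]
  · by_cases hA : i ∈ A <;> simp [hA, hB]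

lemma chi_sum_card (B : Finset (Fin n)) : ((chi B).sum fun _ m => m) = B.card := by
  rw [Finsupp.sum, chi_support]
  rw [Finset.card_eq_sum_ones]
  apply Finset.sum_congr rfl
  intro i hi
  rw [chi_apply, if_pos hi]



variable {n : ℕ}

/-- coefficient of `f * (1 - ξ^w)` -/
lemma coeff_mul_one_sub (v w : Fin n →₀ ℕ) (f : MvPowerSeries (Fin n) ℤ) :
    MvPowerSeries.coeff (R := ℤ) v (f * (1 - MvPowerSeries.monomial (R := ℤ) w 1)) =
      MvPowerSeries.coeff (R := ℤ) v f -
        (if w ≤ v then MvPowerSeries.coeff (R := ℤ) (v - w) f else 0) := by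
  rw [mul_sub, mul_one, map_sub, MvPowerSeries.coeff_mul_monomial]
  split <;> simp

/-- strip lemma: factors with `w ≰ v` do not affect the coefficient at `v`. -/
lemma coeff_mul_prod_of_not_le {v : Fin n →₀ ℕ} (f : MvPowerSeries (Fin n) ℤ)
    (T : Finset (Fin n →₀ ℕ)) (hT : ∀ w ∈ T, ¬ w ≤ v) :
    MvPowerSeries.coeff (R := ℤ) v (f * ∏ w ∈ T, (1 - MvPowerSeries.monomial (R := ℤ) w 1)) =
      MvPowerSeries.coeff (R := ℤ) v f := by
  classical
  induction T using Finset.induction_on with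
  | empty => simp
  | @insert a s hx ih =>
    rw [Finset.prod_insert hx, show f * ((1 - MvPowerSeries.monomial (R := ℤ) a 1) * ∏ w ∈ s, (1 - MvPowerSeries.monomial (R := ℤ) w 1))
        = (f * ∏ w ∈ s, (1 - MvPowerSeries.monomial (R := ℤ) w 1)) * (1 - MvPowerSeries.monomial (R := ℤ) a 1) by ring,
      coeff_mul_one_sub, if_neg (hT a (Finset.mem_insert_self a s)), sub_zero]
    exact ih (fun w hw => hT w (Finset.mem_insert_of_mem hw))

/-- overlap expansion: if the elements of `T` are `≤ v` but pairwise sums are not `≤ v`,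
the coefficient at `v` of `f * ∏ (1-ξ^w)` is `coeff v f - ∑ coeff (v-w) f`. -/
lemma coeff_mul_prod_overlap {v : Fin n →₀ ℕ} (f : MvPowerSeries (Fin n) ℤ)
    (T : Finset (Fin n →₀ ℕ)) (hle : ∀ w ∈ T, w ≤ v)
    (hov : ∀ w ∈ T, ∀ w' ∈ T, w ≠ w' → ¬ w + w' ≤ v) :
    MvPowerSeries.coeff (R := ℤ) v (f * ∏ w ∈ T, (1 - MvPowerSeries.monomial (R := ℤ) w 1)) =
      MvPowerSeries.coeff (R := ℤ) v f - ∑ w ∈ T, MvPowerSeries.coeff (R := ℤ) (v - w) f := by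
  classical
  induction T using Finset.induction_on with
  | empty => simp
  | @insert a s hx ih =>
    rw [Finset.prod_insert hx, show f * ((1 - MvPowerSeries.monomial (R := ℤ) a 1) * ∏ w ∈ s, (1 - MvPowerSeries.monomial (R := ℤ) w 1))
        = (f * ∏ w ∈ s, (1 - MvPowerSeries.monomial (R := ℤ) w 1)) * (1 - MvPowerSeries.monomial (R := ℤ) a 1) by ring,
      coeff_mul_one_sub, if_pos (hle a (Finset.mem_insert_self a s))]
    rw [ih (fun w hw => hle w (Finset.mem_insert_of_mem hw))
        (fun w hw w' hw' hne => hov w (Finset.mem_insert_of_mem hw) w'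
          (Finset.mem_insert_of_mem hw') hne)]
    rw [coeff_mul_prod_of_not_le f s ?_]
    · rw [Finset.sum_insert hx]; ring
    · intro w hw
      have hav : a ≤ v := hle a (Finset.mem_insert_self a s)
      have hne : w ≠ a := by rintro rfl; exact hx hw
      have := hov w (Finset.mem_insert_of_mem hw) a (Finset.mem_insert_self a s) hne
      intro hc
      apply this
      rw [Finsupp.le_def] at hc hav ⊢
      intro i
      have h1 := hc i
      have h2 := hav i
      rw [Finsupp.tsub_apply] at h1
      simp only [Finsupp.add_apply]
      omega


variable {n : ℕ}

def Indep (U : Finset (Fin n)) : Prop := ∀ i ∈ U, ∀ j ∈ U, (j : ℕ) ≠ (i : ℕ) + 1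

instance (U : Finset (Fin n)) : Decidable (Indep U) := by
  unfold Indep; infer_instance

noncomputable def H : MvPowerSeries (Fin n) ℤ :=
  fun u => if Indep u.support then 1 else 0

lemma coeff_H (u : Fin n →₀ ℕ) :
    MvPowerSeries.coeff (R := ℤ) u (H (n := n)) = if Indep u.support then 1 else 0 := rfl

def Avoids (a : Fin n) (f : MvPowerSeries (Fin n) ℤ) : Prop :=
  ∀ u, MvPowerSeries.coeff (R := ℤ) u f ≠ 0 → u a = 0

lemma Avoids.coeff_eq_zero {a : Fin n} {f : MvPowerSeries (Fin n) ℤ}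
    (h : Avoids a f) {u : Fin n →₀ ℕ} (hu : u a ≠ 0) :
    MvPowerSeries.coeff (R := ℤ) u f = 0 := by
  by_contra hc; exact hu (h u hc)

lemma avoids_one_sub_monomial {a : Fin n} {w : Fin n →₀ ℕ} (h : w a = 0) :
    Avoids a (1 - MvPowerSeries.monomial (R := ℤ) w 1) := by
  classical
  intro u hu
  rw [map_sub, MvPowerSeries.coeff_one, MvPowerSeries.coeff_monomial] at hu
  by_contra hc
  have h1 : u ≠ 0 := by rintro rfl; simp at hc
  have h2 : u ≠ w := by rintro rfl; exact hc h
  simp [h1, h2] at hu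

lemma Avoids.mul {a : Fin n} {f g : MvPowerSeries (Fin n) ℤ}
    (hf : Avoids a f) (hg : Avoids a g) : Avoids a (f * g) := by
  intro u hu
  by_contra hc
  apply hu
  classical
  rw [MvPowerSeries.coeff_mul]
  apply Finset.sum_eq_zero
  rintro ⟨p1, p2⟩ hp
  rw [Finset.HasAntidiagonal.mem_antidiagonal] at hp
  have hadd : p1 a + p2 a = u a := by rw [← Finsupp.add_apply, hp]
  by_cases h1 : p1 a = 0
  · have h2 : p2 a ≠ 0 := by omega
    simp [hg.coeff_eq_zero h2]
  · simp [hf.coeff_eq_zero h1]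

lemma avoids_prod {a : Fin n} {β : Type*} {T : Finset β}
    (g : β → MvPowerSeries (Fin n) ℤ)
    (h : ∀ B ∈ T, Avoids a (g B)) : Avoids a (∏ B ∈ T, g B) := by
  classical
  induction T using Finset.induction_on with
  | empty =>
    intro u hu
    rw [Finset.prod_empty, MvPowerSeries.coeff_one] at hu
    by_contra hc
    have : u ≠ 0 := by rintro rfl; simp at hc
    simp [this] at hu
  | @insert B s hB ih =>
    rw [Finset.prod_insert hB]
    exact (h B (Finset.mem_insert_self B s)).mul
      (ih fun C hC => h C (Finset.mem_insert_of_mem hC))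

lemma indep_iff_erase {U : Finset (Fin n)} {a : Fin n}
    (h : ∀ j ∈ U, (j : ℕ) ≠ (a : ℕ) + 1 ∧ (a : ℕ) ≠ (j : ℕ) + 1) :
    Indep U ↔ Indep (U.erase a) := by
  constructor
  · intro hI i hi j hj
    exact hI i (Finset.mem_of_mem_erase hi) j (Finset.mem_of_mem_erase hj)
  · intro hI i hi j hj
    by_cases hia : i = a
    · by_cases hja : j = a
      · subst hia; subst hja; omega
      · subst hia; exact (h j hj).1
    · by_cases hja : j = a
      · subst hja; exact (h i hi).2
      · exact hI i (Finset.mem_erase.2 ⟨hia, hi⟩) j (Finset.mem_erase.2 ⟨hja, hj⟩)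

/-- Claim A -/
lemma coeff_mul_H_erase {P : MvPowerSeries (Fin n) ℤ} {v : Fin n →₀ ℕ} {a : Fin n}
    (hP : Avoids a P) (hva : v a ≠ 0)
    (hnb : ∀ j : Fin n, ((j : ℕ) = (a : ℕ) + 1 ∨ (a : ℕ) = (j : ℕ) + 1) → v j = 0) :
    MvPowerSeries.coeff (R := ℤ) v (P * H) =
      MvPowerSeries.coeff (R := ℤ) (v.erase a) (P * H) := by
  classical
  rw [MvPowerSeries.coeff_mul, MvPowerSeries.coeff_mul]
  rw [show (∑ p ∈ antidiagonal v, MvPowerSeries.coeff (R := ℤ) p.1 P * MvPowerSeries.coeff (R := ℤ) p.2 H)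
      = ∑ p ∈ (antidiagonal v).filter (fun p => p.1 a = 0),
          MvPowerSeries.coeff (R := ℤ) p.1 P * MvPowerSeries.coeff (R := ℤ) p.2 H from
    (Finset.sum_subset (Finset.filter_subset _ _) ?_).symm]
  · apply Finset.sum_nbij' (i := fun p => (p.1, p.2.erase a))
      (j := fun p => (p.1, p.2 + Finsupp.single a (v a)))
    · rintro ⟨p1, p2⟩ hp
      rw [Finset.mem_filter, Finset.HasAntidiagonal.mem_antidiagonal] at hp
      obtain ⟨hps, hpa⟩ := hp
      have hpa : p1 a = 0 := hpa
      rw [Finset.HasAntidiagonal.mem_antidiagonal]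
      ext i
      have hpi : p1 i + p2 i = v i := by rw [← Finsupp.add_apply, hps]
      by_cases hia : i = a
      · subst hia
        simp only [Finsupp.add_apply, Finsupp.erase_same, Finsupp.erase_same]
        omega
      · simp only [Finsupp.add_apply, Finsupp.erase_ne hia]
        exact hpi
    · rintro ⟨q1, q2⟩ hq
      rw [Finset.HasAntidiagonal.mem_antidiagonal] at hq
      have hqi : ∀ i, q1 i + q2 i = (v.erase a) i := by
        intro i; rw [← Finsupp.add_apply, hq]
      have hq1a : q1 a = 0 := by
        have := hqi a; rw [Finsupp.erase_same] at this; omega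
      rw [Finset.mem_filter, Finset.HasAntidiagonal.mem_antidiagonal]
      refine ⟨?_, hq1a⟩
      ext i
      simp only [Finsupp.add_apply]
      by_cases hia : i = a
      · rw [hia, Finsupp.single_eq_same]
        have := hqi a; rw [Finsupp.erase_same] at this
        omega
      · rw [Finsupp.single_eq_of_ne hia]
        have := hqi i; rw [Finsupp.erase_ne hia] at this
        omega
    · rintro ⟨p1, p2⟩ hp
      rw [Finset.mem_filter, Finset.HasAntidiagonal.mem_antidiagonal] at hp
      have hpa : p1 a = 0 := hp.2
      have hpi : ∀ i, p1 i + p2 i = v i := by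
        intro i; rw [← Finsupp.add_apply, hp.1]
      have hp2a : p2 a = v a := by have := hpi a; omega
      rw [Prod.mk.injEq]
      refine ⟨rfl, ?_⟩
      ext i
      simp only [Finsupp.add_apply]
      by_cases hia : i = a
      · subst hia
        rw [Finsupp.erase_same, Finsupp.single_eq_same]
        omega
      · rw [Finsupp.erase_ne hia, Finsupp.single_eq_of_ne hia]
        omega
    · rintro ⟨q1, q2⟩ hq
      rw [Finset.HasAntidiagonal.mem_antidiagonal] at hq
      have hq2a : q2 a = 0 := by
        have : q1 a + q2 a = (v.erase a) a := by rw [← Finsupp.add_apply, hq]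
        rw [Finsupp.erase_same] at this; omega
      rw [Prod.mk.injEq]
      refine ⟨rfl, ?_⟩
      ext i
      by_cases hia : i = a
      · subst hia
        rw [Finsupp.erase_same]
        omega
      · rw [Finsupp.erase_ne hia]
        simp only [Finsupp.add_apply,
          Finsupp.single_eq_of_ne hia]
        omega
    · rintro ⟨p1, p2⟩ hp
      dsimp only at hp ⊢
      rw [Finset.mem_filter, Finset.HasAntidiagonal.mem_antidiagonal] at hp
      have hsub : ∀ i, p2 i ≤ v i := by
        intro i
        have : p1 i + p2 i = v i := by rw [← Finsupp.add_apply, hp.1]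
        omega
      congr 1
      rw [coeff_H, coeff_H, Finsupp.support_erase]
      congr 1
      rw [eq_iff_iff]
      apply indep_iff_erase
      intro j hj
      rw [Finsupp.mem_support_iff] at hj
      have hjv := hsub j
      constructor
      · intro hc
        have := hnb j (Or.inl hc)
        omega
      · intro hc
        have := hnb j (Or.inr hc)
        omega
  · rintro ⟨p1, p2⟩ hp hnf
    rw [Finset.HasAntidiagonal.mem_antidiagonal] at hp
    have : p1 a ≠ 0 := by
      intro hc
      exact hnf (Finset.mem_filter.2 ⟨Finset.HasAntidiagonal.mem_antidiagonal.2 hp, hc⟩)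
    simp [hP.coeff_eq_zero this]

/-- Claim B -/
lemma coeff_mul_H_adj {P : MvPowerSeries (Fin n) ℤ} {v : Fin n →₀ ℕ} {a b : Fin n}
    (hPa : Avoids a P) (hPb : Avoids b P) (hva : v a ≠ 0) (hvb : v b ≠ 0)
    (hab : (b : ℕ) = (a : ℕ) + 1) :
    MvPowerSeries.coeff (R := ℤ) v (P * H) = 0 := by
  classical
  rw [MvPowerSeries.coeff_mul]
  apply Finset.sum_eq_zero
  rintro ⟨p1, p2⟩ hp
  rw [Finset.HasAntidiagonal.mem_antidiagonal] at hp
  have hpi : ∀ i, p1 i + p2 i = v i := by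
    intro i; rw [← Finsupp.add_apply, hp]
  by_cases h1 : p1 a = 0
  · by_cases h2 : p1 b = 0
    · have ha2 : p2 a ≠ 0 := by have := hpi a; omega
      have hb2 : p2 b ≠ 0 := by have := hpi b; omega
      have hni : ¬ Indep p2.support := by
        intro hI
        exact hI a (Finsupp.mem_support_iff.2 ha2) b (Finsupp.mem_support_iff.2 hb2) hab
      have : MvPowerSeries.coeff (R := ℤ) p2 (H (n := n)) = 0 := by
        rw [coeff_H, if_neg hni]
      simp [this]
    · simp [hPb.coeff_eq_zero h2]
  · simp [hPa.coeff_eq_zero h1]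




variable {n : ℕ}

lemma isInterval_nonempty {B : Finset (Fin n)} (h : IsInterval B) : B.Nonempty := by
  obtain ⟨a, b, hab⟩ := h
  have : a ∈ B.image Fin.val := by rw [hab]; simp [Finset.mem_Icc]
  obtain ⟨x, hx, -⟩ := Finset.mem_image.1 this
  exact ⟨x, hx⟩

/-- if `B` is an interval all of whose elements have value `≥ a.val`, and `a ∈ B`,
then the image of `B` is `Icc a.val (a.val + (B.card - 1))`. -/
lemma interval_image_of_min {B : Finset (Fin n)} {a : Fin n}
    (hI : IsInterval B) (ha : a ∈ B) (hmin : ∀ x ∈ B, (a : ℕ) ≤ (x : ℕ)) :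
    B.image Fin.val = Finset.Icc (a : ℕ) ((a : ℕ) + (B.card - 1)) ∧
      B.card = (B.card - 1) + 1 := by
  obtain ⟨s, b, hab⟩ := hI
  have hsB : s ∈ B.image Fin.val := by rw [hab]; simp
  obtain ⟨x, hx, hxs⟩ := Finset.mem_image.1 hsB
  have haB : (a : ℕ) ∈ Finset.Icc s (s + b) := by rw [← hab]; exact Finset.mem_image_of_mem _ ha
  have hsa : s = (a : ℕ) := by
    have h1 := hmin x hx
    rw [Finset.mem_Icc] at haB
    omega
  subst hsa
  have hcard : B.card = b + 1 := by
    rw [← Finset.card_image_of_injective B Fin.val_injective, hab, Nat.card_Icc]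
    omega
  constructor
  · rw [hab]; congr 1; omega
  · omega

lemma block_eq_of_card_eq {A : Finset (Fin n)} {a : Fin n} {B C : Finset (Fin n)}
    (hB : IsInterval B) (hC : IsInterval C) (haB : a ∈ B) (haC : a ∈ C)
    (hBmin : ∀ x ∈ B, (a : ℕ) ≤ (x : ℕ)) (hCmin : ∀ x ∈ C, (a : ℕ) ≤ (x : ℕ))
    (hcard : B.card = C.card) : B = C := by
  have h1 := (interval_image_of_min hB haB hBmin).1
  have h2 := (interval_image_of_min hC haC hCmin).1
  apply Finset.image_injective Fin.val_injective
  rw [h1, h2, hcard]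


open scoped Classical in
noncomputable def SetP (q : ℕ) (A : Finset (Fin n)) : Finset (Finset (Fin n)) :=
  A.powerset.filter (fun B => IsInterval B ∧ B.card % 2 = q)

open scoped Classical in
noncomputable def Blk (q : ℕ) (a : Fin n) (A : Finset (Fin n)) : Finset (Finset (Fin n)) :=
  (SetP q A).filter (fun B => a ∈ B)

lemma mem_SetP {q : ℕ} {A B : Finset (Fin n)} :
    B ∈ SetP q A ↔ B ⊆ A ∧ IsInterval B ∧ B.card % 2 = q := by
  classical
  simp [SetP, Finset.mem_filter, Finset.mem_powerset]

lemma mem_Blk {q : ℕ} {a : Fin n} {A B : Finset (Fin n)} :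
    B ∈ Blk q a A ↔ (B ⊆ A ∧ IsInterval B ∧ B.card % 2 = q) ∧ a ∈ B := by
  classical
  rw [Blk, Finset.mem_filter, mem_SetP]

lemma setP_mono {q : ℕ} {C A : Finset (Fin n)} (h : C ⊆ A) : SetP q C ⊆ SetP q A := by
  intro B hB
  rw [mem_SetP] at hB ⊢
  exact ⟨hB.1.trans h, hB.2⟩

noncomputable def PP (q : ℕ) (A : Finset (Fin n)) : MvPowerSeries (Fin n) ℤ :=
  ∏ B ∈ SetP q A, (1 - MvPowerSeries.monomial (R := ℤ) (chi B) 1)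

noncomputable def FF (A : Finset (Fin n)) : ℤ :=
  MvPowerSeries.coeff (R := ℤ) (chi A) (PP 1 A * H)

noncomputable def GG (A : Finset (Fin n)) : ℤ :=
  MvPowerSeries.coeff (R := ℤ) (chi A) (PP 0 A)

lemma avoids_PP {q : ℕ} {a : Fin n} {A : Finset (Fin n)} (ha : a ∉ A) :
    Avoids a (PP q A) := by
  apply avoids_prod
  intro B hB
  apply avoids_one_sub_monomial
  rw [chi_apply, if_neg]
  intro hc
  exact ha ((mem_SetP.1 hB).1 hc)

/-- reindexed overlap lemma -/
lemma coeff_mul_prod_overlap' {v : Fin n →₀ ℕ} (f : MvPowerSeries (Fin n) ℤ)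
    (T : Finset (Finset (Fin n))) (hle : ∀ B ∈ T, B ⊆ Finset.univ ∧ chi B ≤ v)
    (hov : ∀ B ∈ T, ∀ C ∈ T, B ≠ C → ¬ (chi B + chi C ≤ v)) :
    MvPowerSeries.coeff (R := ℤ) v (f * ∏ B ∈ T, (1 - MvPowerSeries.monomial (R := ℤ) (chi B) 1)) =
      MvPowerSeries.coeff (R := ℤ) v f - ∑ B ∈ T, MvPowerSeries.coeff (R := ℤ) (v - chi B) f := by
  classical
  have hinj : ∀ x ∈ T, ∀ y ∈ T, chi x = chi y → x = y := fun x _ y _ h => chi_inj h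
  rw [show (∏ B ∈ T, (1 - MvPowerSeries.monomial (R := ℤ) (chi B) 1))
      = ∏ w ∈ T.image chi, (1 - MvPowerSeries.monomial (R := ℤ) w 1) from
    (Finset.prod_image (f := fun w => 1 - MvPowerSeries.monomial (R := ℤ) w 1) hinj).symm]
  rw [coeff_mul_prod_overlap f (T.image chi) ?_ ?_]
  · rw [Finset.sum_image hinj]
  · intro w hw
    obtain ⟨B, hB, rfl⟩ := Finset.mem_image.1 hw
    exact (hle B hB).2
  · intro w hw w' hw' hne
    obtain ⟨B, hB, rfl⟩ := Finset.mem_image.1 hw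
    obtain ⟨C, hC, rfl⟩ := Finset.mem_image.1 hw'
    exact hov B hB C hC (fun h => hne (by rw [h]))

/-- strip lemma for `PP` -/
lemma coeff_mul_PP_strip {q : ℕ} {C A : Finset (Fin n)} (hC : C ⊆ A)
    (f : MvPowerSeries (Fin n) ℤ) :
    MvPowerSeries.coeff (R := ℤ) (chi C) (f * PP q A) =
      MvPowerSeries.coeff (R := ℤ) (chi C) (f * PP q C) := by
  classical
  have hsub : SetP q C ⊆ SetP q A := setP_mono hC
  rw [PP, ← Finset.prod_sdiff hsub]
  rw [show f * ((∏ B ∈ SetP q A \ SetP q C, (1 - MvPowerSeries.monomial (R := ℤ) (chi B) 1)) *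
        ∏ B ∈ SetP q C, (1 - MvPowerSeries.monomial (R := ℤ) (chi B) 1))
      = (f * PP q C) * ∏ B ∈ SetP q A \ SetP q C, (1 - MvPowerSeries.monomial (R := ℤ) (chi B) 1) by
    rw [PP]; ring]
  have hinj : ∀ x ∈ SetP q A \ SetP q C, ∀ y ∈ SetP q A \ SetP q C,
      chi x = chi y → x = y := fun x _ y _ h => chi_inj h
  rw [show (∏ B ∈ SetP q A \ SetP q C, (1 - MvPowerSeries.monomial (R := ℤ) (chi B) 1))
      = ∏ w ∈ (SetP q A \ SetP q C).image chi, (1 - MvPowerSeries.monomial (R := ℤ) w 1) from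
    (Finset.prod_image (f := fun w => 1 - MvPowerSeries.monomial (R := ℤ) w 1) hinj).symm]
  apply coeff_mul_prod_of_not_le
  intro w hw
  obtain ⟨B, hB, rfl⟩ := Finset.mem_image.1 hw
  rw [Finset.mem_sdiff] at hB
  rw [chi_le]
  intro hBC
  obtain ⟨h1, h2⟩ := hB
  rw [mem_SetP] at h1
  exact h2 (mem_SetP.2 ⟨hBC, h1.2⟩)

lemma setP_split {q : ℕ} {a : Fin n} {A : Finset (Fin n)} :
    SetP q A = SetP q (A.erase a) ∪ Blk q a A ∧
      Disjoint (SetP q (A.erase a)) (Blk q a A) := by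
  classical
  constructor
  · ext B
    rw [Finset.mem_union, mem_SetP, mem_SetP, mem_Blk]
    constructor
    · intro h
      by_cases ha : a ∈ B
      · exact Or.inr ⟨h, ha⟩
      · exact Or.inl ⟨fun x hx => Finset.mem_erase.2 ⟨fun hc => ha (hc ▸ hx), h.1 hx⟩, h.2⟩
    · rintro (h | h)
      · exact ⟨fun x hx => Finset.mem_of_mem_erase (h.1 hx), h.2⟩
      · exact h.1
  · rw [Finset.disjoint_left]
    intro B hB hB'
    rw [mem_SetP] at hB
    rw [mem_Blk] at hB'
    exact (Finset.mem_erase.1 (hB.1 hB'.2)).1 rfl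

lemma PP_split {q : ℕ} {a : Fin n} {A : Finset (Fin n)} :
    PP q A = PP q (A.erase a) * ∏ B ∈ Blk q a A, (1 - MvPowerSeries.monomial (R := ℤ) (chi B) 1) := by
  rw [PP, (setP_split (q := q) (a := a) (A := A)).1,
    Finset.prod_union (setP_split (q := q) (a := a) (A := A)).2]
  rfl

lemma chi_erase {A : Finset (Fin n)} {a : Fin n} :
    (chi A).erase a = chi (A.erase a) := by
  ext i
  by_cases hia : i = a
  · subst hia; rw [Finsupp.erase_same, chi_apply, if_neg (fun hc => (Finset.mem_erase.1 hc).1 rfl)]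
  · rw [Finsupp.erase_ne hia, chi_apply, chi_apply]
    congr 1
    rw [eq_iff_iff]
    exact ⟨fun h => Finset.mem_erase.2 ⟨hia, h⟩, fun h => Finset.mem_of_mem_erase h⟩

lemma chi_a_ne {A : Finset (Fin n)} {a : Fin n} (ha : a ∈ A) : chi A a ≠ 0 := by
  rw [chi_apply, if_pos ha]; norm_num

lemma hov_blk {A : Finset (Fin n)} {a : Fin n} (ha : a ∈ A) {B C : Finset (Fin n)}
    (haB : a ∈ B) (haC : a ∈ C) : ¬ (chi B + chi C ≤ chi A) := by
  intro h
  have := Finsupp.le_def.1 h a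
  rw [Finsupp.add_apply, chi_apply, chi_apply, chi_apply, if_pos haB, if_pos haC,
    if_pos ha] at this
  omega

lemma sdiff_subset_erase {A B : Finset (Fin n)} {a : Fin n} (haB : a ∈ B) :
    A \ B ⊆ A.erase a := by
  intro x hx
  rw [Finset.mem_sdiff] at hx
  exact Finset.mem_erase.2 ⟨fun hc => hx.2 (hc ▸ haB), hx.1⟩

lemma Grec {A : Finset (Fin n)} (hA : A.Nonempty) :
    GG A = - ∑ B ∈ Blk 0 (A.min' hA) A, GG (A \ B) := by
  classical
  set a := A.min' hA with ha
  have haA : a ∈ A := A.min'_mem hA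
  rw [GG, PP_split (q := 0) (a := a)]
  rw [coeff_mul_prod_overlap' (PP 0 (A.erase a)) (Blk 0 a A)
      (fun B hB => ⟨Finset.subset_univ B, chi_le.2 (mem_Blk.1 hB).1.1⟩)
      (fun B hB C hC _ => hov_blk haA (mem_Blk.1 hB).2 (mem_Blk.1 hC).2)]
  rw [(avoids_PP (Finset.notMem_erase a A)).coeff_eq_zero (chi_a_ne haA), zero_sub,
    neg_inj]
  apply Finset.sum_congr rfl
  intro B hB
  obtain ⟨⟨hBA, -, -⟩, haB⟩ := mem_Blk.1 hB
  rw [chi_sdiff hBA]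
  have hstrip := coeff_mul_PP_strip (q := 0) (sdiff_subset_erase (A := A) haB)
    (1 : MvPowerSeries (Fin n) ℤ)
  rw [one_mul, one_mul] at hstrip
  rw [hstrip, GG]

lemma Frec_common {A : Finset (Fin n)} (hA : A.Nonempty) :
    FF A = MvPowerSeries.coeff (R := ℤ) (chi A) (PP 1 (A.erase (A.min' hA)) * H)
      - ∑ B ∈ Blk 1 (A.min' hA) A, FF (A \ B) := by
  classical
  set a := A.min' hA with ha
  have haA : a ∈ A := A.min'_mem hA
  rw [FF, PP_split (q := 1) (a := a)]
  rw [show PP 1 (A.erase a) * (∏ B ∈ Blk 1 a A, (1 - MvPowerSeries.monomial (R := ℤ) (chi B) 1)) * H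
      = (PP 1 (A.erase a) * H) * ∏ B ∈ Blk 1 a A, (1 - MvPowerSeries.monomial (R := ℤ) (chi B) 1) by ring]
  rw [coeff_mul_prod_overlap' (PP 1 (A.erase a) * H) (Blk 1 a A)
      (fun B hB => ⟨Finset.subset_univ B, chi_le.2 (mem_Blk.1 hB).1.1⟩)
      (fun B hB C hC _ => hov_blk haA (mem_Blk.1 hB).2 (mem_Blk.1 hC).2)]
  congr 1
  apply Finset.sum_congr rfl
  intro B hB
  obtain ⟨⟨hBA, -, -⟩, haB⟩ := mem_Blk.1 hB
  rw [chi_sdiff hBA]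
  have hstrip := coeff_mul_PP_strip (q := 1) (sdiff_subset_erase (A := A) haB)
    (H (n := n))
  rw [show H * PP 1 (A.erase a) = PP 1 (A.erase a) * H by ring] at hstrip
  rw [show H * PP 1 (A \ B) = PP 1 (A \ B) * H by ring] at hstrip
  rw [hstrip, FF]

lemma min_lt_of_mem {A : Finset (Fin n)} (hA : A.Nonempty) {j : Fin n} (hj : j ∈ A) :
    (A.min' hA : ℕ) ≤ (j : ℕ) := A.min'_le j hj

lemma Frec_nob {A : Finset (Fin n)} (hA : A.Nonempty)
    (hnb : ∀ x ∈ A, (x : ℕ) ≠ (A.min' hA : ℕ) + 1) :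
    FF A = FF (A.erase (A.min' hA)) - ∑ B ∈ Blk 1 (A.min' hA) A, FF (A \ B) := by
  classical
  rw [Frec_common hA]
  set a := A.min' hA with ha
  have haA : a ∈ A := A.min'_mem hA
  congr 1
  rw [coeff_mul_H_erase (avoids_PP (Finset.notMem_erase a A)) (chi_a_ne haA) ?_]
  · rw [chi_erase, FF]
  · intro j hj
    rw [chi_apply, if_neg]
    intro hjA
    rcases hj with hj | hj
    · exact hnb j hjA hj
    · have := min_lt_of_mem hA hjA
      omega

lemma Frec_b {A : Finset (Fin n)} (hA : A.Nonempty) {b : Fin n} (hb : b ∈ A)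
    (hb1 : (b : ℕ) = (A.min' hA : ℕ) + 1) :
    FF A = (- ∑ B' ∈ Blk 1 b ((A.erase (A.min' hA))),
        FF (A \ insert (A.min' hA) B'))
      - ∑ B ∈ Blk 1 (A.min' hA) A, FF (A \ B) := by
  classical
  rw [Frec_common hA]
  set a := A.min' hA with ha
  have haA : a ∈ A := A.min'_mem hA
  have hba : b ≠ a := by intro hc; rw [hc] at hb1; omega
  have hbA' : b ∈ A.erase a := Finset.mem_erase.2 ⟨hba, hb⟩
  congr 1
  rw [PP_split (q := 1) (a := b) (A := A.erase a)]
  rw [show PP 1 ((A.erase a).erase b) * (∏ B ∈ Blk 1 b (A.erase a),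
        (1 - MvPowerSeries.monomial (R := ℤ) (chi B) 1)) * H
      = (PP 1 ((A.erase a).erase b) * H) * ∏ B ∈ Blk 1 b (A.erase a),
        (1 - MvPowerSeries.monomial (R := ℤ) (chi B) 1) by ring]
  rw [coeff_mul_prod_overlap' (PP 1 ((A.erase a).erase b) * H) (Blk 1 b (A.erase a))
      (fun B hB => ⟨Finset.subset_univ B,
        chi_le.2 (((mem_Blk.1 hB).1.1.trans (Finset.erase_subset a A)))⟩)
      (fun B hB C hC _ => hov_blk hb (mem_Blk.1 hB).2 (mem_Blk.1 hC).2)]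
  have havA : Avoids a (PP 1 ((A.erase a).erase b)) :=
    avoids_PP (fun hc => Finset.notMem_erase a A (Finset.mem_of_mem_erase hc))
  have havB : Avoids b (PP 1 ((A.erase a).erase b)) :=
    avoids_PP (Finset.notMem_erase b (A.erase a))
  rw [coeff_mul_H_adj havA havB (chi_a_ne haA) (chi_a_ne hb) hb1, zero_sub, neg_inj]
  apply Finset.sum_congr rfl
  intro B' hB'
  obtain ⟨⟨hB'A, -, -⟩, hbB'⟩ := mem_Blk.1 hB'
  have hB'subA : B' ⊆ A := hB'A.trans (Finset.erase_subset a A)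
  rw [chi_sdiff hB'subA]
  have haAB' : a ∈ A \ B' := Finset.mem_sdiff.2 ⟨haA,
    fun hc => Finset.notMem_erase a A (hB'A hc)⟩
  rw [coeff_mul_H_erase havA (chi_a_ne haAB') ?_]
  · rw [chi_erase]
    have herase : (A \ B').erase a = A \ insert a B' := by
      ext x
      rw [Finset.mem_erase, Finset.mem_sdiff, Finset.mem_sdiff, Finset.mem_insert]
      tauto
    rw [herase]
    have hsub : A \ insert a B' ⊆ (A.erase a).erase b := by
      intro x hx
      rw [Finset.mem_sdiff, Finset.mem_insert] at hx
      push_neg at hx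
      exact Finset.mem_erase.2 ⟨fun hc => hx.2.2 (hc ▸ hbB'),
        Finset.mem_erase.2 ⟨hx.2.1, hx.1⟩⟩
    have hstrip := coeff_mul_PP_strip (q := 1) hsub (H (n := n))
    rw [show H * PP 1 ((A.erase a).erase b) = PP 1 ((A.erase a).erase b) * H by ring]
      at hstrip
    rw [show H * PP 1 (A \ insert a B') = PP 1 (A \ insert a B') * H by ring] at hstrip
    rw [hstrip, FF]
  · intro j hj
    rw [chi_apply, if_neg]
    rw [Finset.mem_sdiff]
    rintro ⟨hjA, hjB'⟩
    rcases hj with hj | hj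
    · have : j = b := Fin.val_injective (by omega)
      exact hjB' (this ▸ hbB')
    · have := min_lt_of_mem hA hjA
      omega

lemma image_erase_val {B : Finset (Fin n)} {a : Fin n} :
    (B.erase a).image Fin.val = (B.image Fin.val).erase (a : ℕ) := by
  ext t
  constructor
  · intro ht
    obtain ⟨x, hx, rfl⟩ := Finset.mem_image.1 ht
    obtain ⟨hxa, hxB⟩ := Finset.mem_erase.1 hx
    exact Finset.mem_erase.2 ⟨fun hc => hxa (Fin.val_injective hc),
      Finset.mem_image_of_mem _ hxB⟩
  · intro ht
    obtain ⟨hta, ht'⟩ := Finset.mem_erase.1 ht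
    obtain ⟨x, hxB, rfl⟩ := Finset.mem_image.1 ht'
    exact Finset.mem_image_of_mem _
      (Finset.mem_erase.2 ⟨fun hc => hta (by rw [hc]), hxB⟩)

lemma isInterval_singleton (a : Fin n) : IsInterval ({a} : Finset (Fin n)) := by
  refine ⟨(a : ℕ), 0, ?_⟩
  simp

lemma mem_blk_min {A B : Finset (Fin n)} (hA : A.Nonempty) {q : ℕ}
    (hB : B ∈ Blk q (A.min' hA) A) : ∀ x ∈ B, ((A.min' hA : ℕ)) ≤ (x : ℕ) :=
  fun x hx => A.min'_le x ((mem_Blk.1 hB).1.1 hx)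

lemma blk_image {A B : Finset (Fin n)} (hA : A.Nonempty) {q : ℕ}
    (hB : B ∈ Blk q (A.min' hA) A) :
    B.image Fin.val = Finset.Icc ((A.min' hA : ℕ)) ((A.min' hA : ℕ) + (B.card - 1)) ∧
      B.card = (B.card - 1) + 1 :=
  interval_image_of_min (mem_Blk.1 hB).1.2.1 (mem_Blk.1 hB).2 (mem_blk_min hA hB)

lemma blk_singleton {A B : Finset (Fin n)} (hA : A.Nonempty) {q : ℕ}
    (hB : B ∈ Blk q (A.min' hA) A) (hcard : B.card = 1) : B = {A.min' hA} := by
  apply Finset.image_injective Fin.val_injective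
  rw [(blk_image hA hB).1, hcard]
  simp

lemma blk_contains_b {A B : Finset (Fin n)} (hA : A.Nonempty) {q : ℕ}
    (hB : B ∈ Blk q (A.min' hA) A) (hcard : 2 ≤ B.card) :
    ∃ x ∈ B, (x : ℕ) = (A.min' hA : ℕ) + 1 := by
  have h1 := (blk_image hA hB).1
  have : (A.min' hA : ℕ) + 1 ∈ B.image Fin.val := by
    rw [h1, Finset.mem_Icc]
    omega
  obtain ⟨x, hx, hxv⟩ := Finset.mem_image.1 this
  exact ⟨x, hx, hxv⟩

lemma blk_nob_odd {A : Finset (Fin n)} (hA : A.Nonempty)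
    (hnb : ∀ x ∈ A, (x : ℕ) ≠ (A.min' hA : ℕ) + 1) :
    Blk 1 (A.min' hA) A = {{A.min' hA}} := by
  ext B
  rw [Finset.mem_singleton, mem_Blk]
  constructor
  · rintro ⟨⟨hBA, hBI, hBp⟩, haB⟩
    have hne : B.Nonempty := ⟨_, haB⟩
    rcases Nat.lt_or_ge B.card 2 with h2 | h2
    · have : B.card = 1 := by
        have := Finset.card_pos.2 hne; omega
      exact blk_singleton hA (mem_Blk.2 ⟨⟨hBA, hBI, hBp⟩, haB⟩) this
    · obtain ⟨x, hx, hxv⟩ := blk_contains_b hA (mem_Blk.2 ⟨⟨hBA, hBI, hBp⟩, haB⟩) h2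
      exact absurd hxv (hnb x (hBA hx))
  · rintro rfl
    refine ⟨⟨Finset.singleton_subset_iff.2 (A.min'_mem hA), isInterval_singleton _, by simp⟩,
      Finset.mem_singleton_self _⟩

lemma blk_nob_even {A : Finset (Fin n)} (hA : A.Nonempty)
    (hnb : ∀ x ∈ A, (x : ℕ) ≠ (A.min' hA : ℕ) + 1) :
    Blk 0 (A.min' hA) A = ∅ := by
  ext B
  simp only [Finset.notMem_empty, iff_false]
  intro hB
  obtain ⟨⟨hBA, hBI, hBp⟩, haB⟩ := mem_Blk.1 hB
  have hne : B.Nonempty := ⟨_, haB⟩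
  have h1 := Finset.card_pos.2 hne
  have h2 : 2 ≤ B.card := by omega
  obtain ⟨x, hx, hxv⟩ := blk_contains_b hA hB h2
  exact hnb x (hBA hx) hxv

lemma min'_erase {A : Finset (Fin n)} (hA : A.Nonempty) {b : Fin n} (hb : b ∈ A)
    (hb1 : (b : ℕ) = (A.min' hA : ℕ) + 1) :
    ∃ hA' : (A.erase (A.min' hA)).Nonempty, (A.erase (A.min' hA)).min' hA' = b := by
  have hba : b ≠ A.min' hA := by intro hc; rw [hc] at hb1; omega
  have hbA' : b ∈ A.erase (A.min' hA) := Finset.mem_erase.2 ⟨hba, hb⟩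
  refine ⟨⟨b, hbA'⟩, ?_⟩
  apply le_antisymm
  · exact Finset.min'_le _ b hbA'
  · rw [Fin.le_def]
    have hmem := Finset.min'_mem (A.erase (A.min' hA)) ⟨b, hbA'⟩
    rw [Finset.mem_erase] at hmem
    have h1 := A.min'_le _ hmem.2
    have h2 : (A.erase (A.min' hA)).min' ⟨b, hbA'⟩ ≠ A.min' hA := hmem.1
    have h3 : ((A.erase (A.min' hA)).min' ⟨b, hbA'⟩ : ℕ) ≠ ((A.min' hA : ℕ)) :=
      fun hc => h2 (Fin.val_injective hc)
    rw [Fin.le_def] at h1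
    omega

/-- elements of `A.erase (min' A)` have values `≥ min + 1`. -/
lemma erase_min_lb {A : Finset (Fin n)} (hA : A.Nonempty) {x : Fin n}
    (hx : x ∈ A.erase (A.min' hA)) : (A.min' hA : ℕ) + 1 ≤ (x : ℕ) := by
  rw [Finset.mem_erase] at hx
  have h1 := A.min'_le x hx.2
  have h2 : (x : ℕ) ≠ ((A.min' hA : ℕ)) := fun hc => hx.1 (Fin.val_injective hc)
  rw [Fin.le_def] at h1
  omega

/-- inserting the min: blocks of `A.erase a` at `b` correspond to blocks of `A` at `a`. -/
lemma blk_insert_erase {A : Finset (Fin n)} (hA : A.Nonempty) {b : Fin n} (hb : b ∈ A)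
    (hb1 : (b : ℕ) = (A.min' hA : ℕ) + 1) (q : ℕ) (hq : q < 2) :
    Blk q (A.min' hA) A \ {{A.min' hA}} =
      (Blk (1 - q) b (A.erase (A.min' hA))).image (insert (A.min' hA)) := by
  classical
  set a := A.min' hA with ha
  obtain ⟨hA', hminA'⟩ := min'_erase hA hb hb1
  ext B
  rw [Finset.mem_sdiff, Finset.mem_image, Finset.mem_singleton]
  constructor
  · rintro ⟨hB, hBne⟩
    obtain ⟨⟨hBA, hBI, hBp⟩, haB⟩ := mem_Blk.1 hB
    have hposB := Finset.card_pos.2 ⟨_, haB⟩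
    have hcard2 : 2 ≤ B.card := by
      rcases Nat.lt_or_ge B.card 2 with h2 | h2
      · exact absurd (blk_singleton hA hB (by omega)) hBne
      · exact h2
    refine ⟨B.erase a, ?_, ?_⟩
    · rw [mem_Blk]
      have himg := (blk_image hA hB).1
      have himg' : (B.erase a).image Fin.val =
          Finset.Icc ((a : ℕ) + 1) ((a : ℕ) + (B.card - 1)) := by
        rw [image_erase_val, himg, Finset.Icc_erase_left, ← Finset.Icc_add_one_left_eq_Ioc]
      have hbB : b ∈ B.erase a := by
        have : (a : ℕ) + 1 ∈ (B.erase a).image Fin.val := by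
          rw [himg', Finset.mem_Icc]; omega
        obtain ⟨x, hx, hxv⟩ := Finset.mem_image.1 this
        have : x = b := Fin.val_injective (by omega)
        exact this ▸ hx
      refine ⟨⟨?_, ⟨(a : ℕ) + 1, B.card - 2, ?_⟩, ?_⟩, hbB⟩
      · intro x hx
        rw [Finset.mem_erase] at hx ⊢
        exact ⟨hx.1, hBA hx.2⟩
      · rw [himg']; congr 1; omega
      · rw [Finset.card_erase_of_mem haB]
        omega
    · rw [Finset.insert_erase haB]
  · rintro ⟨B', hB', rfl⟩
    obtain ⟨⟨hB'A, hB'I, hB'p⟩, hbB'⟩ := mem_Blk.1 hB'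
    have haB' : a ∉ B' := fun hc => (Finset.mem_erase.1 (hB'A hc)).1 rfl
    have hposB' := Finset.card_pos.2 ⟨_, hbB'⟩
    have hlb : ∀ x ∈ B', (b : ℕ) ≤ (x : ℕ) := by
      intro x hx
      have := erase_min_lb hA (hB'A hx)
      omega
    have himg' := interval_image_of_min hB'I hbB' hlb
    constructor
    · rw [mem_Blk]
      refine ⟨⟨?_, ⟨(a : ℕ), B'.card, ?_⟩, ?_⟩, Finset.mem_insert_self _ _⟩
      · intro x hx
        rcases Finset.mem_insert.1 hx with rfl | hx'
        · exact A.min'_mem hA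
        · exact Finset.mem_of_mem_erase (hB'A hx')
      · rw [Finset.image_insert, himg'.1]
        ext t
        rw [Finset.mem_insert, Finset.mem_Icc, Finset.mem_Icc]
        omega
      · rw [Finset.card_insert_of_notMem haB']
        omega
    · intro hmem
      have hc : insert a B' = {a} := by simpa using hmem
      have : B'.card + 1 = 1 := by
        rw [← Finset.card_insert_of_notMem haB', hc, Finset.card_singleton]
      omega

lemma sdiff_insert_eq {A B' : Finset (Fin n)} {a : Fin n} :
    A \ insert a B' = (A.erase a) \ B' := by
  ext x
  rw [Finset.mem_sdiff, Finset.mem_sdiff, Finset.mem_insert, Finset.mem_erase]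
  tauto

lemma insert_inj_on_blk {A' : Finset (Fin n)} {a b : Fin n} {q : ℕ}
    (ha : a ∉ A') : ∀ B' ∈ Blk q b A', ∀ C' ∈ Blk q b A',
      insert a B' = insert a C' → B' = C' := by
  intro B' hB' C' hC' h
  have haB' : a ∉ B' := fun hc => ha ((mem_Blk.1 hB').1.1 hc)
  have haC' : a ∉ C' := fun hc => ha ((mem_Blk.1 hC').1.1 hc)
  rw [← Finset.erase_insert haB', ← Finset.erase_insert haC', h]

theorem FF_eq_GG (A : Finset (Fin n)) : FF A = GG A := by
  classical
  induction A using Finset.strongInduction with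
  | _ A ih =>
  rcases A.eq_empty_or_nonempty with rfl | hA
  · have hset : ∀ q, SetP (n := n) q ∅ = ∅ := by
      intro q
      ext B
      rw [mem_SetP]
      simp only [Finset.subset_empty, Finset.notMem_empty, iff_false]
      rintro ⟨rfl, hI, -⟩
      exact absurd (isInterval_nonempty hI) (by simp)
    have hPP : ∀ q, PP (n := n) q ∅ = 1 := by
      intro q; rw [PP, hset, Finset.prod_empty]
    have hchi : chi (∅ : Finset (Fin n)) = 0 := chi_eq_zero.2 rfl
    rw [FF, GG, hPP 1, hPP 0, one_mul, hchi, coeff_H, MvPowerSeries.coeff_one,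
      if_pos rfl, if_pos ?_]
    intro i hi
    exact absurd hi (by simp)
  · set a := A.min' hA with haa
    by_cases hb : ∃ x ∈ A, (x : ℕ) = (a : ℕ) + 1
    · obtain ⟨b, hbA, hb1⟩ := hb
      obtain ⟨hA', hminA'⟩ := min'_erase hA hbA hb1
      have haA : a ∈ A := A.min'_mem hA
      -- IH applications
      have ihblk : ∀ B ∈ Blk 1 a A, FF (A \ B) = GG (A \ B) := by
        intro B hB
        exact ih _ (Finset.sdiff_ssubset (mem_Blk.1 hB).1.1 ⟨a, (mem_Blk.1 hB).2⟩)
      have ihins : ∀ q, ∀ B' ∈ Blk q b (A.erase a),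
          FF (A \ insert a B') = GG (A \ insert a B') := by
        intro q B' hB'
        apply ih
        apply Finset.sdiff_ssubset
        · intro x hx
          rcases Finset.mem_insert.1 hx with rfl | hx'
          · exact haA
          · exact Finset.mem_of_mem_erase ((mem_Blk.1 hB').1.1 hx')
        · exact ⟨a, Finset.mem_insert_self _ _⟩
      -- the odd-blocks sum of GG vanishes
      have key : ∑ B ∈ Blk 1 a A, GG (A \ B) = 0 := by
        have hmem : ({a} : Finset (Fin n)) ∈ Blk 1 a A := by
          rw [mem_Blk]
          exact ⟨⟨Finset.singleton_subset_iff.2 haA, isInterval_singleton a, by simp⟩,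
            Finset.mem_singleton_self a⟩
        rw [← Finset.sum_erase_add _ _ hmem]
        have herase : (Blk 1 a A).erase {a} = (Blk 0 b (A.erase a)).image (insert a) := by
          rw [Finset.erase_eq]
          have := blk_insert_erase hA hbA hb1 1 (by omega)
          simpa using this
        rw [herase, Finset.sum_image (insert_inj_on_blk (Finset.notMem_erase a A))]
        have hGrec : GG (A.erase a) = - ∑ B ∈ Blk 0 b (A.erase a), GG ((A.erase a) \ B) := by
          have := Grec hA'
          rwa [hminA'] at this
        have hterm : ∀ B' ∈ Blk 0 b (A.erase a),
            GG (A \ insert a B') = GG ((A.erase a) \ B') := by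
          intro B' _
          rw [sdiff_insert_eq]
        rw [Finset.sum_congr rfl hterm]
        have hsingle : A \ ({a} : Finset (Fin n)) = A.erase a := by
          rw [Finset.erase_eq]
        rw [hsingle, hGrec]
        ring
      -- Frec and conclude
      rw [Frec_b hA hbA hb1]
      rw [Finset.sum_congr rfl ihblk, key, sub_zero]
      rw [Finset.sum_congr rfl (ihins 1)]
      have hblk0 : Blk 0 a A = (Blk 1 b (A.erase a)).image (insert a) := by
        have h1 := blk_insert_erase hA hbA hb1 0 (by omega)
        have h2 : ({a} : Finset (Fin n)) ∉ Blk 0 a A := by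
          intro hc
          have := (mem_Blk.1 hc).1.2.2
          simp at this
        rw [← h1, Finset.sdiff_eq_self_iff_disjoint.2 ?_]
        rw [Finset.disjoint_singleton_right]
        exact h2
      rw [Grec hA, ← haa, hblk0,
        Finset.sum_image (insert_inj_on_blk (Finset.notMem_erase a A))]
    · push_neg at hb
      rw [Frec_nob hA hb, Grec hA, ← haa, blk_nob_even hA hb, blk_nob_odd hA hb,
        Finset.sum_singleton, Finset.sum_empty, neg_zero]
      have hsingle : A \ ({a} : Finset (Fin n)) = A.erase a := by
        rw [Finset.erase_eq]
      rw [hsingle, sub_self]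

section Hilb

variable (K : Type*) [Field K]

lemma pathIdeal'_eq_span_image :
    pathIdeal K n = Ideal.span
      ((fun s => (MvPolynomial.monomial s) (1 : K)) ''
        {s | ∃ i j : Fin n, (j : ℕ) = (i : ℕ) + 1 ∧
          s = Finsupp.single i 1 + Finsupp.single j 1}) := by
  rw [pathIdeal]
  congr 1
  ext m
  constructor
  · rintro ⟨i, j, hij, rfl⟩
    exact ⟨Finsupp.single i 1 + Finsupp.single j 1, ⟨i, j, hij, rfl⟩, by
      rw [MvPolynomial.X, MvPolynomial.X, MvPolynomial.monomial_mul, one_mul]⟩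
  · rintro ⟨s, ⟨i, j, hij, rfl⟩, rfl⟩
    exact ⟨i, j, hij, by
      rw [MvPolynomial.X, MvPolynomial.X, MvPolynomial.monomial_mul, one_mul]⟩

lemma monomial_mem_pathIdeal' {u : Fin n →₀ ℕ} :
    (MvPolynomial.monomial u) (1 : K) ∈ pathIdeal K n ↔ ¬ Indep u.support := by
  rw [pathIdeal'_eq_span_image, MvPolynomial.mem_ideal_span_monomial_image]
  have hsupp : (MvPolynomial.monomial u (1 : K)).support = {u} := by
    rw [MvPolynomial.support_monomial, if_neg one_ne_zero]
  rw [hsupp]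
  simp only [Finset.mem_singleton, forall_eq]
  constructor
  · rintro ⟨s, ⟨i, j, hij, rfl⟩, hle⟩
    intro hI
    have hii : u i ≥ 1 := by
      have := Finsupp.le_def.1 hle i
      rw [Finsupp.add_apply, Finsupp.single_eq_same] at this
      omega
    have hjj : u j ≥ 1 := by
      have := Finsupp.le_def.1 hle j
      rw [Finsupp.add_apply, Finsupp.single_eq_same] at this
      omega
    exact hI i (Finsupp.mem_support_iff.2 (by omega)) j (Finsupp.mem_support_iff.2 (by omega)) hij
  · intro hI
    rw [Indep] at hI
    push_neg at hI
    obtain ⟨i, hi, j, hj, hij⟩ := hI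
    refine ⟨Finsupp.single i 1 + Finsupp.single j 1, ⟨i, j, hij, rfl⟩, ?_⟩
    have hne : i ≠ j := by intro hc; rw [hc] at hij; omega
    rw [Finsupp.le_def]
    intro k
    rw [Finsupp.add_apply, Finsupp.single_apply, Finsupp.single_apply]
    rw [Finsupp.mem_support_iff] at hi hj
    by_cases hki : i = k
    · subst hki
      rw [if_pos rfl, if_neg (fun hc => hne hc.symm)]
      omega
    · by_cases hkj : j = k
      · subst hkj
        rw [if_neg hki, if_pos rfl]
        omega
      · rw [if_neg hki, if_neg hkj]
        omega

lemma hilbF'_eq (u : Fin n →₀ ℕ) :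
    (Module.finrank K
      ((Submodule.span K {(MvPolynomial.monomial u) (1 : K)}).map
        (Ideal.Quotient.mkₐ K (pathIdeal K n)).toLinearMap) : ℤ) =
      if Indep u.support then 1 else 0 := by
  rw [Submodule.map_span, Set.image_singleton]
  by_cases h : Indep u.support
  · rw [if_pos h]
    have hne : (Ideal.Quotient.mkₐ K (pathIdeal K n)).toLinearMap
        ((MvPolynomial.monomial u) (1 : K)) ≠ 0 := by
      intro hc
      have : (MvPolynomial.monomial u) (1 : K) ∈ pathIdeal K n := by
        rwa [← Ideal.Quotient.eq_zero_iff_mem]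
      exact (monomial_mem_pathIdeal' (K := K)).1 this h
    rw [finrank_span_singleton hne]
    norm_num
  · rw [if_neg h]
    have hz : (Ideal.Quotient.mkₐ K (pathIdeal K n)).toLinearMap
        ((MvPolynomial.monomial u) (1 : K)) = 0 := by
      have : (MvPolynomial.monomial u) (1 : K) ∈ pathIdeal K n :=
        (monomial_mem_pathIdeal' (K := K)).2 h
      exact Ideal.Quotient.eq_zero_iff_mem.2 this
    rw [hz, Submodule.span_zero_singleton, finrank_bot]
    norm_num

end Hilb

lemma hilbSeries_eq_H {K : Type*} [Field K] :
    hilbSeries K (pathIdeal K n) = H := by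
  funext u
  show ((hilbF K (pathIdeal K n) u : ℤ)) = _
  rw [show (H (n := n)) u = if Indep u.support then 1 else 0 from rfl]
  rw [hilbF]
  exact hilbF'_eq K u

lemma coeff_zero_mul (f g : MvPowerSeries (Fin n) ℤ) :
    MvPowerSeries.coeff (R := ℤ) 0 (f * g) =
      MvPowerSeries.coeff (R := ℤ) 0 f * MvPowerSeries.coeff (R := ℤ) 0 g := by
  rw [MvPowerSeries.coeff_zero_eq_constantCoeff, map_mul]

lemma coeff_zero_one_sub {v : Fin n →₀ ℕ} (hv : v ≠ 0) :
    MvPowerSeries.coeff (R := ℤ) 0 (1 - MvPowerSeries.monomial (R := ℤ) v 1) = 1 := by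
  classical
  rw [map_sub, MvPowerSeries.coeff_one, MvPowerSeries.coeff_monomial,
    if_pos rfl, if_neg (fun hc => hv hc.symm)]
  ring

lemma coeff_zero_pow_one_sub {v : Fin n →₀ ℕ} (hv : v ≠ 0) (e : ℕ) :
    MvPowerSeries.coeff (R := ℤ) 0 ((1 - MvPowerSeries.monomial (R := ℤ) v 1) ^ e) = 1 := by
  induction e with
  | zero => simp
  | succ e ih =>
    rw [pow_succ, coeff_zero_mul, ih, coeff_zero_one_sub hv, one_mul]

/-- B4 -/
lemma coeff_one_sub_pow_mul {v : Fin n →₀ ℕ} (hv : v ≠ 0) (e : ℕ)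
    (Φ : MvPowerSeries (Fin n) ℤ) :
    MvPowerSeries.coeff (R := ℤ) v ((1 - MvPowerSeries.monomial (R := ℤ) v 1) ^ e * Φ) =
      MvPowerSeries.coeff (R := ℤ) v Φ - e * MvPowerSeries.coeff (R := ℤ) 0 Φ := by
  induction e with
  | zero => simp
  | succ e ih =>
    rw [show (1 - MvPowerSeries.monomial (R := ℤ) v 1) ^ (e + 1) * Φ
        = ((1 - MvPowerSeries.monomial (R := ℤ) v 1) ^ e * Φ) * (1 - MvPowerSeries.monomial (R := ℤ) v 1) by ring]
    rw [coeff_mul_one_sub, if_pos le_rfl, tsub_self, ih,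
      coeff_zero_mul, coeff_zero_pow_one_sub hv]
    push_cast
    ring

lemma coeff_zero_prod_one_sub {T : Finset (Finset (Fin n))}
    (h : ∀ B ∈ T, B.Nonempty) :
    MvPowerSeries.coeff (R := ℤ) 0 (∏ B ∈ T, (1 - MvPowerSeries.monomial (R := ℤ) (chi B) 1)) = 1 := by
  classical
  induction T using Finset.induction_on with
  | empty => simp
  | @insert B s hB ih =>
    rw [Finset.prod_insert hB, coeff_zero_mul,
      coeff_zero_one_sub (fun hc => ?_), ih (fun C hC => h C (Finset.mem_insert_of_mem hC)),
      one_mul]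
    have := h B (Finset.mem_insert_self B s)
    rw [chi_eq_zero.1 hc] at this
    exact Finset.not_nonempty_empty this

lemma coeff_zero_H : MvPowerSeries.coeff (R := ℤ) 0 (H (n := n)) = 1 := by
  rw [show MvPowerSeries.coeff (R := ℤ) 0 (H (n := n))
      = if Indep ((0 : Fin n →₀ ℕ)).support then 1 else 0 from rfl]
  rw [if_pos]
  intro i hi
  exact absurd hi (by simp)

lemma Iic_chi (A : Finset (Fin n)) : Finset.Iic (chi A) = A.powerset.image chi := by
  ext w
  rw [Finset.mem_Iic, Finset.mem_image]
  constructor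
  · intro h
    obtain ⟨hw, hsub⟩ := eq_chi_of_le h
    exact ⟨w.support, Finset.mem_powerset.2 hsub, hw.symm⟩
  · rintro ⟨B, hB, rfl⟩
    exact chi_le.2 (Finset.mem_powerset.1 hB)

lemma setP_erase_of_parity {q : ℕ} {A : Finset (Fin n)} (h : ¬ A.card % 2 = q) :
    (SetP q A).erase A = SetP q A := by
  apply Finset.erase_eq_of_notMem
  intro hc
  exact h (mem_SetP.1 hc).2.2

open scoped Classical in
lemma prod_transform {A : Finset (Fin n)} (hA : A.Nonempty)
    (ε : (Fin n →₀ ℕ) → ℕ) (q : ℕ)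
    (hIH : ∀ B, B ⊆ A → B ≠ A → B.Nonempty →
      ε (chi B) = if IsInterval B then 1 else 0) :
    ∏ w ∈ (Finset.Iic (chi A)).filter
        (fun w => w ≠ 0 ∧ (w.sum fun _ m => m) % 2 = q),
      (1 - MvPowerSeries.monomial (R := ℤ) w 1) ^ ε w
    = (if A.card % 2 = q then (1 - MvPowerSeries.monomial (R := ℤ) (chi A) 1) ^ ε (chi A) else 1) *
      ∏ B ∈ (SetP q A).erase A, (1 - MvPowerSeries.monomial (R := ℤ) (chi B) 1) := by
  classical
  rw [Iic_chi, Finset.filter_image]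
  rw [Finset.prod_image (fun x _ y _ h => chi_inj h)]
  have hfilter : A.powerset.filter
        (fun B => chi B ≠ 0 ∧ ((chi B).sum fun _ m => m) % 2 = q)
      = A.powerset.filter (fun B => B.Nonempty ∧ B.card % 2 = q) := by
    apply Finset.filter_congr
    intro B hB
    rw [chi_sum_card]
    constructor
    · rintro ⟨h1, h2⟩
      exact ⟨Finset.nonempty_iff_ne_empty.2 (fun hc => h1 (chi_eq_zero.2 hc)), h2⟩
    · rintro ⟨h1, h2⟩
      exact ⟨fun hc => Finset.not_nonempty_empty (chi_eq_zero.1 hc ▸ h1), h2⟩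
  rw [hfilter]
  have hmain : ∀ (S : Finset (Finset (Fin n))),
      (∀ B ∈ S, B ⊆ A ∧ B ≠ A ∧ B.Nonempty ∧ B.card % 2 = q) →
      (∀ B, (B ∈ S ↔ (B ⊆ A ∧ IsInterval B ∧ B.card % 2 = q) ∧ B ≠ A) → True) →
      True := fun _ _ _ => trivial
  by_cases hAq : A.card % 2 = q
  · have hAP : A ∈ A.powerset.filter (fun B => B.Nonempty ∧ B.card % 2 = q) := by
      rw [Finset.mem_filter, Finset.mem_powerset]
      exact ⟨Finset.Subset.refl A, hA, hAq⟩
    rw [← Finset.mul_prod_erase _ _ hAP, if_pos hAq]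
    congr 1
    rw [show (∏ B ∈ (A.powerset.filter
          (fun B => B.Nonempty ∧ B.card % 2 = q)).erase A,
        (1 - MvPowerSeries.monomial (R := ℤ) (chi B) 1) ^ ε (chi B))
      = ∏ B ∈ (A.powerset.filter
          (fun B => B.Nonempty ∧ B.card % 2 = q)).erase A,
        (if IsInterval B then (1 - MvPowerSeries.monomial (R := ℤ) (chi B) 1) else 1) from
      Finset.prod_congr rfl ?_]
    · rw [← Finset.prod_filter]
      congr 1
      ext B
      rw [Finset.mem_filter, Finset.mem_erase, Finset.mem_filter, Finset.mem_powerset,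
        Finset.mem_erase, mem_SetP]
      constructor
      · rintro ⟨⟨hne, hsub, -, hq2⟩, hI⟩
        exact ⟨hne, hsub, hI, hq2⟩
      · rintro ⟨hne, hsub, hI, hq2⟩
        exact ⟨⟨hne, hsub, isInterval_nonempty hI, hq2⟩, hI⟩
    · intro B hB
      rw [Finset.mem_erase, Finset.mem_filter, Finset.mem_powerset] at hB
      rw [hIH B hB.2.1 hB.1 hB.2.2.1]
      by_cases hI : IsInterval B
      · rw [if_pos hI, if_pos hI, pow_one]
      · rw [if_neg hI, if_neg hI, pow_zero]
  · rw [if_neg hAq, one_mul, setP_erase_of_parity hAq]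
    rw [show (∏ B ∈ A.powerset.filter (fun B => B.Nonempty ∧ B.card % 2 = q),
        (1 - MvPowerSeries.monomial (R := ℤ) (chi B) 1) ^ ε (chi B))
      = ∏ B ∈ A.powerset.filter (fun B => B.Nonempty ∧ B.card % 2 = q),
        (if IsInterval B then (1 - MvPowerSeries.monomial (R := ℤ) (chi B) 1) else 1) from
      Finset.prod_congr rfl ?_]
    · rw [← Finset.prod_filter]
      congr 1
      ext B
      rw [Finset.mem_filter, Finset.mem_filter, Finset.mem_powerset, mem_SetP]
      constructor
      · rintro ⟨⟨hsub, -, hq2⟩, hI⟩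
        exact ⟨hsub, hI, hq2⟩
      · rintro ⟨hsub, hI, hq2⟩
        exact ⟨⟨hsub, isInterval_nonempty hI, hq2⟩, hI⟩
    · intro B hB
      rw [Finset.mem_filter, Finset.mem_powerset] at hB
      have hBA : B ≠ A := by
        rintro rfl
        exact hAq hB.2.2
      rw [hIH B hB.1 hBA hB.2.1]
      by_cases hI : IsInterval B
      · rw [if_pos hI, if_pos hI, pow_one]
      · rw [if_neg hI, if_neg hI, pow_zero]

lemma setP_nonempty_mem {q : ℕ} {A B : Finset (Fin n)} (hB : B ∈ (SetP q A).erase A) :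
    B.Nonempty :=
  isInterval_nonempty (mem_SetP.1 (Finset.mem_of_mem_erase hB)).2.1

open scoped Classical in
lemma eps_chi {K : Type*} [Field K] (ε : (Fin n →₀ ℕ) → ℕ)
    (hε : IsMultigradedDeviations K (pathIdeal K n) ε) :
    ∀ A : Finset (Fin n), A.Nonempty → ε (chi A) = if IsInterval A then 1 else 0 := by
  intro A
  induction A using Finset.strongInduction with
  | _ A ih =>
  intro hA
  have hIH : ∀ B, B ⊆ A → B ≠ A → B.Nonempty →
      ε (chi B) = if IsInterval B then 1 else 0 := by
    intro B hsub hne hBne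
    exact ih B (Finset.ssubset_iff_subset_ne.2 ⟨hsub, hne⟩) hBne
  have heq := hε (chi A)
  rw [hilbSeries_eq_H] at heq
  rw [prod_transform hA ε 1 hIH, prod_transform hA ε 0 hIH] at heq
  have hchiA : chi A ≠ 0 := fun hc =>
    Finset.not_nonempty_empty (chi_eq_zero.1 hc ▸ hA)
  have hc1 : MvPowerSeries.coeff (R := ℤ) 0
      ((∏ B ∈ (SetP 1 A).erase A, (1 - MvPowerSeries.monomial (R := ℤ) (chi B) 1)) * H) = 1 := by
    rw [coeff_zero_mul, coeff_zero_H,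
      coeff_zero_prod_one_sub (fun B hB => setP_nonempty_mem hB), one_mul]
  have hc0 : MvPowerSeries.coeff (R := ℤ) 0
      (∏ B ∈ (SetP 0 A).erase A, (1 - MvPowerSeries.monomial (R := ℤ) (chi B) 1)) = 1 :=
    coeff_zero_prod_one_sub (fun B hB => setP_nonempty_mem hB)
  have hFG := FF_eq_GG A
  rcases Nat.mod_two_eq_zero_or_one A.card with hpar | hpar
  · -- |A| even
    rw [if_neg (by omega), if_pos hpar, one_mul] at heq
    have h1 : (SetP 1 A).erase A = SetP 1 A := setP_erase_of_parity (by omega)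
    rw [h1] at heq
    rw [show ((1 - MvPowerSeries.monomial (R := ℤ) (chi A) 1) ^ ε (chi A) *
          ∏ B ∈ (SetP 0 A).erase A, (1 - MvPowerSeries.monomial (R := ℤ) (chi B) 1))
        = (1 - MvPowerSeries.monomial (R := ℤ) (chi A) 1) ^ ε (chi A) *
          ∏ B ∈ (SetP 0 A).erase A, (1 - MvPowerSeries.monomial (R := ℤ) (chi B) 1) from rfl,
      coeff_one_sub_pow_mul hchiA (ε (chi A)) _, hc0, mul_one] at heq
    have hFF : MvPowerSeries.coeff (R := ℤ) (chi A)
        ((∏ B ∈ SetP 1 A, (1 - MvPowerSeries.monomial (R := ℤ) (chi B) 1)) * H) = FF A := rfl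
    rw [hFF, hFG] at heq
    by_cases hI : IsInterval A
    · have hAmem : A ∈ SetP 0 A := mem_SetP.2 ⟨Finset.Subset.refl A, hI, hpar⟩
      have hGG : GG A = MvPowerSeries.coeff (R := ℤ) (chi A)
          (∏ B ∈ (SetP 0 A).erase A, (1 - MvPowerSeries.monomial (R := ℤ) (chi B) 1)) - 1 := by
        rw [GG, PP, ← Finset.mul_prod_erase _ _ hAmem]
        rw [show ((1 - MvPowerSeries.monomial (R := ℤ) (chi A) 1) *
              ∏ B ∈ (SetP 0 A).erase A, (1 - MvPowerSeries.monomial (R := ℤ) (chi B) 1))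
            = (1 - MvPowerSeries.monomial (R := ℤ) (chi A) 1) ^ 1 *
              ∏ B ∈ (SetP 0 A).erase A, (1 - MvPowerSeries.monomial (R := ℤ) (chi B) 1) by ring]
        rw [coeff_one_sub_pow_mul hchiA 1 _, hc0]
        push_cast
        ring
      rw [hGG] at heq
      rw [if_pos hI]
      have : (ε (chi A) : ℤ) = 1 := by linarith
      exact_mod_cast this
    · have h0 : (SetP 0 A).erase A = SetP 0 A :=
        Finset.erase_eq_of_notMem (fun hc => hI (mem_SetP.1 hc).2.1)
      have hGG : GG A = MvPowerSeries.coeff (R := ℤ) (chi A)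
          (∏ B ∈ (SetP 0 A).erase A, (1 - MvPowerSeries.monomial (R := ℤ) (chi B) 1)) := by
        rw [GG, PP, h0]
      rw [hGG] at heq
      rw [if_neg hI]
      have : (ε (chi A) : ℤ) = 0 := by linarith
      exact_mod_cast this
  · -- |A| odd
    rw [if_pos hpar, if_neg (by omega), one_mul] at heq
    rw [show ((1 - MvPowerSeries.monomial (R := ℤ) (chi A) 1) ^ ε (chi A) *
          ∏ B ∈ (SetP 1 A).erase A, (1 - MvPowerSeries.monomial (R := ℤ) (chi B) 1)) * H
        = (1 - MvPowerSeries.monomial (R := ℤ) (chi A) 1) ^ ε (chi A) *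
          ((∏ B ∈ (SetP 1 A).erase A, (1 - MvPowerSeries.monomial (R := ℤ) (chi B) 1)) * H) by ring,
      coeff_one_sub_pow_mul hchiA (ε (chi A)) _, hc1, mul_one] at heq
    have h0 : (SetP 0 A).erase A = SetP 0 A := setP_erase_of_parity (by omega)
    have hGG : MvPowerSeries.coeff (R := ℤ) (chi A)
        (∏ B ∈ (SetP 0 A).erase A, (1 - MvPowerSeries.monomial (R := ℤ) (chi B) 1)) = GG A := by
      rw [GG, PP, h0]
    rw [hGG, ← hFG] at heq
    by_cases hI : IsInterval A
    · have hAmem : A ∈ SetP 1 A := mem_SetP.2 ⟨Finset.Subset.refl A, hI, hpar⟩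
      have hFF : FF A = MvPowerSeries.coeff (R := ℤ) (chi A)
          ((∏ B ∈ (SetP 1 A).erase A, (1 - MvPowerSeries.monomial (R := ℤ) (chi B) 1)) * H) - 1 := by
        rw [FF, PP, ← Finset.mul_prod_erase _ _ hAmem]
        rw [show ((1 - MvPowerSeries.monomial (R := ℤ) (chi A) 1) *
              ∏ B ∈ (SetP 1 A).erase A, (1 - MvPowerSeries.monomial (R := ℤ) (chi B) 1)) * H
            = (1 - MvPowerSeries.monomial (R := ℤ) (chi A) 1) ^ 1 *
              ((∏ B ∈ (SetP 1 A).erase A, (1 - MvPowerSeries.monomial (R := ℤ) (chi B) 1)) * H) by ring]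
        rw [coeff_one_sub_pow_mul hchiA 1 _, hc1]
        push_cast
        ring
      rw [hFF] at heq
      rw [if_pos hI]
      have : (ε (chi A) : ℤ) = 1 := by linarith
      exact_mod_cast this
    · have h1 : (SetP 1 A).erase A = SetP 1 A :=
        Finset.erase_eq_of_notMem (fun hc => hI (mem_SetP.1 hc).2.1)
      have hFF : FF A = MvPowerSeries.coeff (R := ℤ) (chi A)
          ((∏ B ∈ (SetP 1 A).erase A, (1 - MvPowerSeries.monomial (R := ℤ) (chi B) 1)) * H) := by
        rw [FF, PP, h1]
      rw [hFF] at heq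
      rw [if_neg hI]
      have : (ε (chi A) : ℤ) = 0 := by linarith
      exact_mod_cast this

end PathDev

open scoped Classical in
/-- for `R = S/I(P_n)` (`n ≥ 3`) and a nonzero squarefree `v ∈ ℕ^n`, the
multigraded deviation `ε_v(R)` equals `1` if `Supp v` is an interval and `0`
otherwise. -/
theorem deviations_path_squarefree (K : Type*) [Field K] (n : ℕ) (hn : 3 ≤ n)
    (ε : (Fin n →₀ ℕ) → ℕ) (hε : IsMultigradedDeviations K (pathIdeal K n) ε) :
    ∀ v : Fin n →₀ ℕ, v ≠ 0 → (∀ i, v i ≤ 1) →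
      ε v = if IsInterval v.support then 1 else 0 := by
  intro v hv hsf
  have hv' : v = PathDev.chi v.support := by
    ext i
    rw [PathDev.chi_apply]
    by_cases hi : i ∈ v.support
    · rw [if_pos hi]
      have h1 := hsf i
      have h2 : v i ≠ 0 := Finsupp.mem_support_iff.1 hi
      omega
    · rw [if_neg hi]
      exact Finsupp.notMem_support_iff.1 hi
  have hne : v.support.Nonempty := Finsupp.support_nonempty_iff.2 hv
  calc ε v = ε (PathDev.chi v.support) := by rw [← hv']
  _ = if IsInterval v.support then 1 else 0 := PathDev.eps_chi ε hε v.support hne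
end

section
/- Let I be a monomial ideal in S = k[T_1,...,T_n], F a multigraded free resolution of R = S/I, and a ∈ N^n. Let F_{≤a} be the subcomplex of F generated by the standard basis elements of multidegrees v ≤ a (componentwise). Then F_{≤a} is a free resolution of S/I_{≤a}, where I_{≤a} is the ideal generated by the elements of I of multidegree ≤ a. In particular, if I is squarefree then the multigraded Betti numbers β_{i,v}^S(R) vanish unless v is a squarefree vector. -/
set_option synthInstance.maxHeartbeats 1000000
set_option maxHeartbeats 1000000

open MvPolynomial Classical

noncomputable def extendZero (R : Type*) [CommRing R] {ι : Type*} (P : ι → Prop) :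
    ({j // P j} → R) →ₗ[R] (ι → R) where
  toFun x l := if h : P l then x ⟨l, h⟩ else 0
  map_add' x y := by funext l; by_cases h : P l <;> simp [h]
  map_smul' r x := by funext l; by_cases h : P l <;> simp [h]

section Part1

variable {K : Type*} [Field K] {n : ℕ}

noncomputable def mcomp {m : Type*} (g : m → (Fin n →₀ ℕ)) (w : Fin n →₀ ℕ)
    (x : m → MvPolynomial (Fin n) K) : m → MvPolynomial (Fin n) K :=
  fun j => if g j ≤ w then monomial (w - g j) (MvPolynomial.coeff (w - g j) (x j)) else 0

lemma extendZero_apply {R : Type*} [CommRing R] {ι : Type*} {P : ι → Prop}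
    (x : {j // P j} → R) (l : ι) :
    extendZero R P x l = if h : P l then x ⟨l, h⟩ else 0 := rfl

lemma extendZero_pos {R : Type*} [CommRing R] {ι : Type*} {P : ι → Prop}
    (x : {j // P j} → R) {l : ι} (h : P l) : extendZero R P x l = x ⟨l, h⟩ := dif_pos h

lemma extendZero_neg {R : Type*} [CommRing R] {ι : Type*} {P : ι → Prop}
    (x : {j // P j} → R) {l : ι} (h : ¬ P l) : extendZero R P x l = 0 := dif_neg h

lemma extendZero_ne_zero {R : Type*} [CommRing R] {ι : Type*} {P : ι → Prop}
    {x : {j // P j} → R} {l : ι} (h : extendZero R P x l ≠ 0) : P l := by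
  by_contra hc; exact h (extendZero_neg x hc)

lemma mcomp_extendZero {m : Type*} (g : m → (Fin n →₀ ℕ)) (P : m → Prop) (w : Fin n →₀ ℕ)
    (x : {j // P j} → MvPolynomial (Fin n) K) :
    mcomp g w (extendZero _ P x) =
      extendZero _ P (mcomp (fun j => g j.1) w x) := by
  funext j
  by_cases h : P j
  · rw [extendZero_pos _ h]
    simp only [mcomp, extendZero_pos _ h]
  · rw [extendZero_neg _ h]
    simp only [mcomp, extendZero_neg _ h]
    split <;> simp

lemma mcomp_idem {m : Type*} (g : m → (Fin n →₀ ℕ)) (w : Fin n →₀ ℕ)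
    (x : m → MvPolynomial (Fin n) K) : mcomp g w (mcomp g w x) = mcomp g w x := by
  funext j
  simp only [mcomp]
  split <;> simp [coeff_monomial]

/-- division by `T^(w-w')` of a homogeneous vector of degree `w`. -/
noncomputable def mdiv {m : Type*} (g : m → (Fin n →₀ ℕ)) (w w' : Fin n →₀ ℕ)
    (x : m → MvPolynomial (Fin n) K) : m → MvPolynomial (Fin n) K :=
  fun j => if g j ≤ w' then monomial (w' - g j) (MvPolynomial.coeff (w - g j) (x j)) else 0

lemma mdiv_spec {m : Type*} {g : m → (Fin n →₀ ℕ)} {w a : Fin n →₀ ℕ}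
    {x : m → MvPolynomial (Fin n) K}
    (hga : ∀ j, x j ≠ 0 → g j ≤ a) (hx : mcomp g w x = x) :
    monomial (w - w ⊓ a) (1 : K) • mdiv g w (w ⊓ a) x = x ∧
      mcomp g (w ⊓ a) (mdiv g w (w ⊓ a) x) = mdiv g w (w ⊓ a) x := by
  set w' := w ⊓ a with hw'
  have hzero : ∀ j, ¬ g j ≤ w' → x j = 0 := by
    intro j hj
    by_contra hc
    have h2 := hga j hc
    have h3 : g j ≤ w := by
      by_contra h3
      apply hc
      rw [← hx]
      simp [mcomp, if_neg h3]
    exact hj (le_inf h3 h2)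
  constructor
  · funext j
    by_cases h : g j ≤ w'
    · have hw : g j ≤ w := h.trans inf_le_left
      have harith : (w - w') + (w' - g j) = w - g j := by
        ext k
        have h1 : (g j) k ≤ w' k := h k
        have h2 : w' k ≤ w k := (inf_le_left : w' ≤ w) k
        simp only [Finsupp.add_apply, Finsupp.tsub_apply]
        omega
      simp only [mdiv, if_pos h, Pi.smul_apply, smul_eq_mul, monomial_mul, one_mul, harith]
      conv_rhs => rw [← hx]
      simp [mcomp, if_pos hw]
    · simp only [mdiv, if_neg h, Pi.smul_apply, smul_eq_mul, mul_zero]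
      exact (hzero j h).symm
  · funext j
    simp only [mcomp, mdiv]
    split <;> simp [coeff_monomial]

lemma mcomp_sum {m α : Type*} (g : m → (Fin n →₀ ℕ)) (w : Fin n →₀ ℕ)
    (t : Finset α) (f : α → (m → MvPolynomial (Fin n) K)) :
    mcomp g w (∑ s ∈ t, f s) = ∑ s ∈ t, mcomp g w (f s) := by
  funext j
  simp only [mcomp, Finset.sum_apply]
  by_cases h : g j ≤ w
  · simp only [if_pos h, coeff_sum, map_sum]
  · simp [if_neg h]

lemma mcomp_decompose {m : Type*} [Fintype m] (g : m → (Fin n →₀ ℕ))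
    (x : m → MvPolynomial (Fin n) K) :
    x = ∑ w ∈ Finset.univ.biUnion (fun j => (x j).support.image (· + g j)), mcomp g w x := by
  funext j
  rw [Finset.sum_apply]
  have hsub : (x j).support.image (· + g j) ⊆
      Finset.univ.biUnion (fun j => (x j).support.image (· + g j)) := by
    intro w hw; exact Finset.mem_biUnion.2 ⟨j, Finset.mem_univ j, hw⟩
  rw [← Finset.sum_subset hsub, Finset.sum_image (by
    intro u _ u' _ h; exact add_right_cancel h)]
  · conv_lhs => rw [← (x j).support_sum_monomial_coeff]
    refine Finset.sum_congr rfl fun u hu => ?_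
    have h1 : g j ≤ u + g j := le_add_self
    simp [mcomp, if_pos h1]
  · intro w _ hw
    simp only [mcomp]
    by_cases h : g j ≤ w
    · rw [if_pos h]
      have : MvPolynomial.coeff (w - g j) (x j) = 0 := by
        by_contra hc
        exact hw (Finset.mem_image.2 ⟨w - g j, mem_support_iff.2 hc, tsub_add_cancel_of_le h⟩)
      simp [this]
    · exact if_neg h

lemma pi_single_eq {m : Type*} [DecidableEq m] (l : m)
    (p : MvPolynomial (Fin n) K) :
    (Pi.single l p : m → MvPolynomial (Fin n) K) =
      p • (Pi.single l (1 : MvPolynomial (Fin n) K) : m → MvPolynomial (Fin n) K) := by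
  funext j
  by_cases h : j = l
  · subst h; simp
  · simp [Pi.single_eq_of_ne h]

lemma eq_monomial_of_support_subset {p : MvPolynomial (Fin n) K} {e : Fin n →₀ ℕ}
    (h : p.support ⊆ {e}) : p = monomial e (MvPolynomial.coeff e p) := by
  rcases Finset.subset_singleton_iff.1 h with h0 | h1
  · rw [(support_eq_empty).1 h0]
    simp [coeff_zero]
  · conv_lhs => rw [← p.support_sum_monomial_coeff]
    rw [h1, Finset.sum_singleton]

lemma mcomp_comm {N M : ℕ} (gN : Fin N → (Fin n →₀ ℕ)) (gM : Fin M → (Fin n →₀ ℕ))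
    (D : (Fin M → MvPolynomial (Fin n) K) →ₗ[MvPolynomial (Fin n) K]
      (Fin N → MvPolynomial (Fin n) K))
    (hD : ∀ l j, ∀ e ∈ (D (Pi.single l 1) j).support, e + gN j = gM l)
    (w : Fin n →₀ ℕ) (x : Fin M → MvPolynomial (Fin n) K) :
    mcomp gN w (D x) = D (mcomp gM w x) := by
  have key : ∀ (l : Fin M) (u : Fin n →₀ ℕ) (c : K),
      mcomp gN w (D (Pi.single l (monomial u c))) =
        D (mcomp gM w (Pi.single l (monomial u c))) := by
    intro l u c
    have hrhs : mcomp gM w (Pi.single l (monomial u c)) =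
        if w = u + gM l then Pi.single l (monomial u c) else 0 := by
      funext j
      by_cases hj : j = l
      · subst hj
        simp only [mcomp, Pi.single_eq_same]
        by_cases h1 : gM j ≤ w
        · rw [if_pos h1, coeff_monomial]
          by_cases h2 : w = u + gM j
          · have : w - gM j = u := by
              rw [h2]; exact add_tsub_cancel_right ..
            rw [if_pos this.symm, this, if_pos h2, Pi.single_eq_same]
          · have : ¬ (w - gM j = u) := fun hc => h2 (by rw [← hc, tsub_add_cancel_of_le h1])
            rw [if_neg (fun hc => this hc.symm), if_neg h2]
            simp
        · rw [if_neg h1]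
          have : ¬ (w = u + gM j) := fun hc => h1 (hc ▸ le_add_self)
          rw [if_neg this]; simp
      · simp only [mcomp, Pi.single_eq_of_ne hj, coeff_zero, map_zero]
        have : (if w = u + gM l then (Pi.single l ((monomial u) c) :
            Fin M → MvPolynomial (Fin n) K) else 0) j = 0 := by
          split <;> simp [Pi.single_eq_of_ne hj]
        rw [this]
        split <;> simp
    rw [hrhs]
    by_cases hw : w = u + gM l
    · rw [if_pos hw]
      funext j
      have hx : D (Pi.single l (monomial u c)) j =
          monomial u c * D (Pi.single l 1) j := by
        rw [pi_single_eq, map_smul]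
        rfl
      have hsupp : ∀ e ∈ (D (Pi.single l (monomial u c)) j).support,
          e + gN j = u + gM l := by
        intro e he
        rw [hx] at he
        have := MvPolynomial.support_mul _ _ he
        rw [Finset.mem_add] at this
        obtain ⟨e1, he1, e2, he2, rfl⟩ := this
        have he1' : e1 = u := by
          by_cases hc : c = 0
          · simp [hc] at he1
          · rwa [support_monomial, if_neg hc, Finset.mem_singleton] at he1
        subst he1'
        rw [add_assoc, hD l j e2 he2]
      by_cases hz : D (Pi.single l (monomial u c)) j = 0
      · have : MvPolynomial.coeff (w - gN j) (D (Pi.single l (monomial u c)) j) = 0 := by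
          rw [hz]; exact coeff_zero _
        simp only [mcomp, hz, this]
        split <;> simp
      · obtain ⟨e0, he0⟩ := (support_nonempty).2 hz
        have he0' := hsupp e0 he0
        have hle : gN j ≤ w := by
          rw [hw, ← he0']; exact le_add_self
        have hwe : w - gN j = e0 := by
          rw [hw, ← he0']; exact add_tsub_cancel_right ..
        have hss : (D (Pi.single l (monomial u c)) j).support ⊆ {w - gN j} := by
          intro e he
          rw [Finset.mem_singleton, hwe]
          have := hsupp e he
          have := he0'.trans this.symm
          exact add_right_cancel this.symm
        simp only [mcomp, if_pos hle]
        exact (eq_monomial_of_support_subset hss).symm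
    · rw [if_neg hw, map_zero]
      funext j
      simp only [mcomp, Pi.zero_apply]
      by_cases h1 : gN j ≤ w
      · rw [if_pos h1]
        have : MvPolynomial.coeff (w - gN j) (D (Pi.single l (monomial u c)) j) = 0 := by
          by_contra hc
          have hx : D (Pi.single l (monomial u c)) j =
              monomial u c * D (Pi.single l 1) j := by
            rw [pi_single_eq, map_smul]; rfl
          have hmem := mem_support_iff.2 hc
          rw [hx] at hmem
          have := MvPolynomial.support_mul _ _ hmem
          rw [Finset.mem_add] at this
          obtain ⟨e1, he1, e2, he2, heq⟩ := this
          have he1' : e1 = u := by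
            by_cases hcc : c = 0
            · simp [hcc] at he1
            · rwa [support_monomial, if_neg hcc, Finset.mem_singleton] at he1
          subst he1'
          apply hw
          rw [← tsub_add_cancel_of_le h1, ← heq, add_assoc, hD l j e2 he2]
        simp [this]
      · exact if_neg h1
  have hx : x = ∑ l, Pi.single l (x l) := by
    rw [Finset.univ_sum_single]
  rw [hx, map_sum, mcomp_sum, mcomp_sum, map_sum]
  refine Finset.sum_congr rfl fun l _ => ?_
  conv_lhs => rw [← (x l).support_sum_monomial_coeff]
  conv_rhs => rw [← (x l).support_sum_monomial_coeff]
  have hsing : ∀ (p q : MvPolynomial (Fin n) K),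
      (Pi.single l (p + q) : Fin M → MvPolynomial (Fin n) K) =
      Pi.single l p + Pi.single l q := fun p q => by
    funext j; by_cases h : j = l
    · subst h; simp
    · simp [Pi.single_eq_of_ne h]
  rw [show (Pi.single l (∑ u ∈ (x l).support, monomial u (MvPolynomial.coeff u (x l))) :
      Fin M → MvPolynomial (Fin n) K) =
      ∑ u ∈ (x l).support, Pi.single l (monomial u (MvPolynomial.coeff u (x l))) by
    induction (x l).support using Finset.induction with
    | empty => simp
    | insert _ _ h ih => rw [Finset.sum_insert h, Finset.sum_insert h, hsing, ih]]
  rw [map_sum, mcomp_sum, mcomp_sum, map_sum]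
  exact Finset.sum_congr rfl fun u _ => key l u _

/-- the subcomplex property: the differential of homogeneous elements supported
in multidegrees `≤ a` is again supported in multidegrees `≤ a`. -/
lemma d_extend_zero {N M : ℕ} {gN : Fin N → (Fin n →₀ ℕ)} {gM : Fin M → (Fin n →₀ ℕ)}
    (D : (Fin M → MvPolynomial (Fin n) K) →ₗ[MvPolynomial (Fin n) K]
      (Fin N → MvPolynomial (Fin n) K))
    (hD : ∀ l j, ∀ e ∈ (D (Pi.single l 1) j).support, e + gN j = gM l)
    (a : Fin n →₀ ℕ) (x : {l // gM l ≤ a} → MvPolynomial (Fin n) K)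
    {j : Fin N} (hj : ¬ gN j ≤ a) :
    D (extendZero (MvPolynomial (Fin n) K) (fun l => gM l ≤ a) x) j = 0 := by
  set y := extendZero (MvPolynomial (Fin n) K) (fun l => gM l ≤ a) x with hy
  have h1 : y = ∑ l, Pi.single l (y l) := by rw [Finset.univ_sum_single]
  rw [h1, map_sum, Finset.sum_apply]
  refine Finset.sum_eq_zero fun l _ => ?_
  rw [pi_single_eq, map_smul]
  show y l * D (Pi.single l 1) j = 0
  by_cases hz : y l = 0
  · rw [hz, zero_mul]
  · by_cases hz2 : D (Pi.single l 1) j = 0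
    · rw [hz2, mul_zero]
    · exfalso
      obtain ⟨e, he⟩ := (support_nonempty).2 hz2
      have h2 := hD l j e he
      have hz' : extendZero (MvPolynomial (Fin n) K) (fun l => gM l ≤ a) x l ≠ 0 := by
        rw [← hy]; exact hz
      have h3 : gM l ≤ a := extendZero_ne_zero (R := MvPolynomial (Fin n) K) (P := fun l => gM l ≤ a) hz'
      exact hj (le_trans (h2 ▸ le_add_self) h3)

lemma mcomp_zero {m : Type*} (g : m → (Fin n →₀ ℕ)) (w : Fin n →₀ ℕ) :
    mcomp g w (0 : m → MvPolynomial (Fin n) K) = 0 := by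
  funext j; simp [mcomp]

lemma mcomp_ne_zero_le {m : Type*} {g : m → (Fin n →₀ ℕ)} {w : Fin n →₀ ℕ}
    {x : m → MvPolynomial (Fin n) K} {j : m} (h : mcomp g w x j ≠ 0) : g j ≤ w := by
  by_contra hc; exact h (by simp [mcomp, if_neg hc])

end Part1

/-- The multidegree-`v` strand of the Koszul complex `K^S ⊗_S (S/I)` in homological
degree `i`: it has a `k`-basis of pairs `(A, u)` with `A ⊆ {1,...,n}` of cardinality `i`,
`u + χ_A = v`, and `T^u ∉ I`. -/
abbrev kzStrand (K : Type*) [Field K] {n : ℕ} (I : Ideal (MvPolynomial (Fin n) K))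
    (v : Fin n → ℕ) (i : ℕ) : Type _ :=
  {p : Finset (Fin n) × (Fin n → ℕ) // p.1.card = i ∧
      (∀ j, p.2 j + (if j ∈ p.1 then 1 else 0) = v j) ∧
      monomial (Finsupp.equivFunOnFinite.symm p.2) (1 : K) ∉ I} →₀ K

/-- The Koszul differential on the multidegree-`v` strand. -/
noncomputable def kzD (K : Type*) [Field K] {n : ℕ} (I : Ideal (MvPolynomial (Fin n) K))
    (v : Fin n → ℕ) (i : ℕ) :
    kzStrand K I v (i + 1) →ₗ[K] kzStrand K I v i :=
  Finsupp.lsum K fun p =>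
    LinearMap.toSpanSingleton K _
      (∑ j ∈ p.1.1.attach,
        if h : monomial (Finsupp.equivFunOnFinite.symm
            (Function.update p.1.2 j.1 (p.1.2 j.1 + 1))) (1 : K) ∉ I then
          Finsupp.single
            (⟨(p.1.1.erase j.1, Function.update p.1.2 j.1 (p.1.2 j.1 + 1)), by
              obtain ⟨hc, hu, hm⟩ := p.2
              refine ⟨by rw [Finset.card_erase_of_mem j.2, hc]; rfl, fun l => ?_, h⟩
              dsimp only
              by_cases hl : l = j.1
              · subst hl
                have h1 := hu j.1
                rw [if_pos j.2] at h1
                rw [Function.update_self, if_neg (Finset.notMem_erase _ _)]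
                omega
              · have h1 := hu l
                rw [Function.update_of_ne hl]
                simpa [Finset.mem_erase, hl] using h1⟩ :
              {p : Finset (Fin n) × (Fin n → ℕ) // p.1.card = i ∧
                (∀ j, p.2 j + (if j ∈ p.1 then 1 else 0) = v j) ∧
                monomial (Finsupp.equivFunOnFinite.symm p.2) (1 : K) ∉ I})
            ((-1 : K) ^ ((p.1.1.filter (fun l => l < j.1)).card))
        else 0)

/-- The multigraded Betti number `β_{i,v}^S(S/I) = dim_k Tor_i^S(S/I, k)_v`, computed as
the dimension of the homology of the multidegree-`v` strand of the Koszul complex. -/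
noncomputable def kzBetti (K : Type*) [Field K] {n : ℕ}
    (I : Ideal (MvPolynomial (Fin n) K)) (i : ℕ) (v : Fin n → ℕ) : ℕ :=
  match i with
  | 0 => Module.finrank K (kzStrand K I v 0) -
      Module.finrank K (LinearMap.range (kzD K I v 0))
  | (i + 1) => Module.finrank K (LinearMap.ker (kzD K I v i)) -
      Module.finrank K (LinearMap.range (kzD K I v (i + 1)))


section Part2

variable {K : Type*} [Field K] {n : ℕ}

/-- The index type of the strand. -/
abbrev KzIdx (K : Type*) [Field K] {n : ℕ} (I : Ideal (MvPolynomial (Fin n) K))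
    (v : Fin n → ℕ) (i : ℕ) : Type _ :=
  {p : Finset (Fin n) × (Fin n → ℕ) // p.1.card = i ∧
      (∀ j, p.2 j + (if j ∈ p.1 then 1 else 0) = v j) ∧
      monomial (Finsupp.equivFunOnFinite.symm p.2) (1 : K) ∉ I}

variable (I : Ideal (MvPolynomial (Fin n) K)) (v : Fin n → ℕ) (l : Fin n)

lemma memI_up {u u' : Fin n → ℕ} (h : ∀ k, u k ≤ u' k)
    (hu : monomial (Finsupp.equivFunOnFinite.symm u) (1:K) ∈ I) :
    monomial (Finsupp.equivFunOnFinite.symm u') (1:K) ∈ I := by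
  have heq : monomial (Finsupp.equivFunOnFinite.symm (fun k => u' k - u k)) (1:K) *
      monomial (Finsupp.equivFunOnFinite.symm u) (1:K)
      = monomial (Finsupp.equivFunOnFinite.symm u') (1:K) := by
    rw [monomial_mul, one_mul]
    have hfe : (Finsupp.equivFunOnFinite.symm fun k => u' k - u k) +
        Finsupp.equivFunOnFinite.symm u = Finsupp.equivFunOnFinite.symm u' := by
      ext k
      rw [Finsupp.add_apply]
      simp only [Finsupp.coe_equivFunOnFinite_symm]
      have := h k
      omega
    rw [hfe]
  rw [← heq]
  exact I.mul_mem_left _ hu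

/-- the body of the contracting homotopy. -/
noncomputable def kzSS (hv : 2 ≤ v l) {i : ℕ} (p : KzIdx K I v i) :
    kzStrand K I v (i + 1) :=
  if h : l ∈ p.1.1 then 0 else
    Finsupp.single
      (⟨(insert l p.1.1, Function.update p.1.2 l (p.1.2 l - 1)), by
        obtain ⟨hc, hu, hm⟩ := p.2
        have hul : p.1.2 l = v l := by
          have h1 := hu l; rw [if_neg h] at h1; omega
        refine ⟨by rw [Finset.card_insert_of_notMem h, hc], fun k => ?_, ?_⟩
        · dsimp only
          by_cases hk : k = l
          · subst hk
            rw [Function.update_self, if_pos (Finset.mem_insert_self _ _)]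
            omega
          · rw [Function.update_of_ne hk]
            simp only [Finset.mem_insert, hk, false_or]
            exact hu k
        · intro hmem
          apply hm
          refine memI_up I (fun k => ?_) hmem
          dsimp only
          by_cases hk : k = l
          · subst hk; rw [Function.update_self]; omega
          · rw [Function.update_of_ne hk]⟩ : KzIdx K I v (i+1))
      ((-1 : K) ^ ((p.1.1.filter (fun m => m < l)).card))

/-- the contracting homotopy on the strand, when `v l ≥ 2`. -/
noncomputable def kzS (hv : 2 ≤ v l) (i : ℕ) :
    kzStrand K I v i →ₗ[K] kzStrand K I v (i + 1) :=
  Finsupp.lsum K fun p => LinearMap.toSpanSingleton K _ (kzSS I v l hv p)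

/-- the body of the differential. -/
noncomputable def kzDD {i : ℕ} (p : KzIdx K I v (i+1)) : kzStrand K I v i :=
  ∑ j ∈ p.1.1.attach,
    if h : monomial (Finsupp.equivFunOnFinite.symm
        (Function.update p.1.2 j.1 (p.1.2 j.1 + 1))) (1 : K) ∉ I then
      Finsupp.single
        (⟨(p.1.1.erase j.1, Function.update p.1.2 j.1 (p.1.2 j.1 + 1)), by
          obtain ⟨hc, hu, hm⟩ := p.2
          refine ⟨by rw [Finset.card_erase_of_mem j.2, hc]; rfl, fun l => ?_, h⟩
          dsimp only
          by_cases hl : l = j.1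
          · subst hl
            have h1 := hu j.1
            rw [if_pos j.2] at h1
            rw [Function.update_self, if_neg (Finset.notMem_erase _ _)]
            omega
          · have h1 := hu l
            rw [Function.update_of_ne hl]
            simpa [Finset.mem_erase, hl] using h1⟩ : KzIdx K I v i)
        ((-1 : K) ^ ((p.1.1.filter (fun l => l < j.1)).card))
    else 0

lemma kzD_single {i : ℕ} (p : KzIdx K I v (i+1)) (c : K) :
    kzD K I v i (Finsupp.single p c) = c • kzDD I v p := by
  rw [kzD, Finsupp.lsum_single, LinearMap.toSpanSingleton_apply]
  rfl

lemma kzS_single (hv : 2 ≤ v l) {i : ℕ} (p : KzIdx K I v i) (c : K) :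
    kzS I v l hv i (Finsupp.single p c) = c • kzSS I v l hv p := by
  rw [kzS, Finsupp.lsum_single, LinearMap.toSpanSingleton_apply]
lemma kzSS_of_mem (hv : 2 ≤ v l) {i : ℕ} (p : KzIdx K I v i) (hmem : l ∈ p.1.1) :
    kzSS I v l hv p = 0 := dif_pos hmem

lemma kz_homotopy_single (hv : 2 ≤ v l)
    (hsq : ∀ u u' : Fin n → ℕ, (∀ k, k ≠ l → u k ≤ u' k) → 1 ≤ u' l →
      monomial (Finsupp.equivFunOnFinite.symm u) (1:K) ∈ I →
      monomial (Finsupp.equivFunOnFinite.symm u') (1:K) ∈ I)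
    (i : ℕ) (p : KzIdx K I v (i+1)) :
    kzD K I v (i+1) (kzSS I v l hv p) + kzS I v l hv i (kzDD I v p) =
      Finsupp.single p 1 := by
  obtain ⟨⟨A, u⟩, hP⟩ := p
  obtain ⟨hc, hu, hm⟩ := hP
  dsimp only at hc hu hm
  by_cases h : l ∈ A
  · -- `l ∈ A` : the first summand vanishes
    have h1 : kzSS I v l hv ⟨(A, u), ⟨hc, hu, hm⟩⟩ = 0 := dif_pos h
    rw [h1, map_zero, zero_add]
    -- expand the second
    rw [kzDD, map_sum]
    have hlA : (⟨l, h⟩ : {x // x ∈ A}) ∈ A.attach := Finset.mem_attach _ _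
    rw [Finset.sum_eq_single_of_mem ⟨l, h⟩ hlA ?side]
    case side =>
      intro j _ hjne
      have hjl : j.1 ≠ l := fun hc' => hjne (Subtype.ext hc')
      split
      · rw [kzS_single, kzSS_of_mem (hmem := Finset.mem_erase.2 ⟨hjl.symm, h⟩), smul_zero]
      · exact map_zero _
    · -- the main term
      dsimp only
      have hul : u l + 1 = v l := by have := hu l; rwa [if_pos h] at this
      have hcnd : monomial (Finsupp.equivFunOnFinite.symm
          (Function.update u l (u l + 1))) (1 : K) ∉ I := by
        intro hmem
        apply hm
        refine hsq (Function.update u l (u l + 1)) u (fun k hk => ?_) (by omega) hmem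
        rw [Function.update_of_ne hk]
      rw [dif_pos hcnd, kzS_single]
      have h2 : kzSS I v l hv
          (⟨(A.erase l, Function.update u l (u l + 1)), by
            refine ⟨by rw [Finset.card_erase_of_mem h, hc]; rfl, fun k => ?_, hcnd⟩
            dsimp only
            by_cases hk : k = l
            · subst hk
              rw [Function.update_self, if_neg (Finset.notMem_erase _ _)]
              omega
            · rw [Function.update_of_ne hk]
              have h1 := hu k
              simpa [Finset.mem_erase, hk] using h1⟩ : KzIdx K I v i)
          = Finsupp.single ⟨(A, u), ⟨hc, hu, hm⟩⟩
              ((-1 : K) ^ (((A.erase l).filter (fun m => m < l)).card)) := by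
        rw [kzSS]
        rw [dif_neg (by simpa using Finset.notMem_erase l A)]
        congr 1
        apply Subtype.ext
        dsimp only
        refine Prod.ext (Finset.insert_erase h) ?_
        rw [Function.update_self, Function.update_idem, Nat.add_sub_cancel,
          Function.update_eq_self]
      rw [h2, Finsupp.smul_single, smul_eq_mul, Finset.filter_erase,
        Finset.erase_eq_of_notMem (by simp), ← pow_add]
      rw [Even.neg_one_pow ⟨(A.filter (fun m => m < l)).card, rfl⟩]
  · -- `l ∉ A`
    have hul : u l = v l := by have h1 := hu l; rw [if_neg h] at h1; omega
    have hjlne : ∀ j : Fin n, j ∈ A → j ≠ l := fun j hj e => h (e ▸ hj)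
    -- unfold the first summand
    rw [show kzSS I v l hv ⟨(A, u), ⟨hc, hu, hm⟩⟩ = _ from rfl]
    rw [kzSS]
    dsimp only
    rw [dif_neg h, kzD_single, kzDD]
    dsimp only
    have hnotmem : (⟨l, Finset.mem_insert_self l A⟩ : {x // x ∈ insert l A}) ∉
        A.attach.image (fun x => (⟨x.1, Finset.mem_insert_of_mem x.2⟩ :
          {x // x ∈ insert l A})) := by
      intro hmem
      obtain ⟨x, -, hx2⟩ := Finset.mem_image.1 hmem
      have hx3 := congrArg Subtype.val hx2
      dsimp at hx3
      exact h (hx3 ▸ x.2)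
    have hinj : ∀ x ∈ A.attach, ∀ y ∈ A.attach,
        (⟨x.1, Finset.mem_insert_of_mem x.2⟩ : {x // x ∈ insert l A}) =
          ⟨y.1, Finset.mem_insert_of_mem y.2⟩ → x = y := by
      intro x _ y _ hxy
      have h5 : x.1 = y.1 := by simpa using hxy
      exact Subtype.ext h5
    rw [Finset.attach_insert, Finset.sum_insert hnotmem, Finset.sum_image hinj]
    dsimp only
    have hvv : Function.update (Function.update u l (u l - 1)) l
        (Function.update u l (u l - 1) l + 1) = u := by
      rw [Function.update_self, Function.update_idem,
        show u l - 1 + 1 = u l by omega, Function.update_eq_self]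
    simp only [hvv, Finset.erase_insert h, Finset.filter_insert, if_neg (lt_irrefl l)]
    rw [dif_pos hm]
    -- expand the second summand
    rw [show kzDD I v (⟨(A, u), ⟨hc, hu, hm⟩⟩ : KzIdx K I v (i+1)) = _ from rfl, kzDD,
      map_sum]
    dsimp only
    simp only [apply_dite (kzS I v l hv i), map_zero, kzS_single]
    simp only [kzSS, Finset.mem_erase, h, and_false, dite_false]
    -- merge everything
    rw [smul_add, Finsupp.smul_single, smul_eq_mul, ← pow_add,
      Even.neg_one_pow ⟨(A.filter (fun m => m < l)).card, rfl⟩, add_assoc,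
      add_eq_left, Finset.smul_sum, ← Finset.sum_add_distrib]
    refine Finset.sum_eq_zero fun j hj => ?_
    have hne : j.1 ≠ l := hjlne j.1 j.2
    by_cases hcj : monomial (Finsupp.equivFunOnFinite.symm
        (Function.update u j.1 (u j.1 + 1))) (1 : K) ∉ I
    · -- both conditions hold
      have hcj' : monomial (Finsupp.equivFunOnFinite.symm
          (Function.update (Function.update u l (u l - 1)) j.1
            (Function.update u l (u l - 1) j.1 + 1))) (1 : K) ∉ I := by
        intro hmem
        apply hcj
        refine memI_up I (fun k => ?_) hmem
        by_cases hk1 : k = j.1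
        · subst hk1
          rw [Function.update_self, Function.update_self,
            Function.update_of_ne hne]
        · rw [Function.update_of_ne hk1, Function.update_of_ne hk1]
          by_cases hk2 : k = l
          · subst hk2; rw [Function.update_self]; omega
          · rw [Function.update_of_ne hk2]
      rw [dif_pos hcj', dif_pos hcj]
      have hval3 : Function.update (Function.update u l (u l - 1)) j.1
          (Function.update u l (u l - 1) j.1 + 1)
          = Function.update (Function.update u j.1 (u j.1 + 1)) l
            (Function.update u j.1 (u j.1 + 1) l - 1) := by
        funext k
        by_cases hk1 : k = j.1
        · subst hk1
          simp only [Function.update_self, Function.update_of_ne hne]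
        · by_cases hk2 : k = l
          · subst hk2
            simp only [Function.update_self, Function.update_of_ne (Ne.symm hne)]
          · simp only [Function.update_of_ne hk1, Function.update_of_ne hk2]
      simp only [hval3, Finset.erase_insert_of_ne (Ne.symm hne), Finset.filter_erase]
      rw [Finsupp.smul_single, Finsupp.smul_single, smul_eq_mul, smul_eq_mul,
        ← Finsupp.single_add, Finsupp.single_eq_zero]
      rcases lt_or_gt_of_ne hne with hlt | hlt
      · -- j < l
        rw [if_neg (asymm hlt),
          Finset.card_erase_of_mem (s := A.filter (fun m => m < l)) (a := j.1)
            (Finset.mem_filter.2 ⟨j.2, hlt⟩)]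
        obtain ⟨m, hmember⟩ : ∃ m, (A.filter (fun m => m < l)).card = m + 1 :=
          ⟨(A.filter (fun m => m < l)).card - 1, by
            have hpos : 0 < (A.filter (fun m => m < l)).card :=
              Finset.card_pos.2 ⟨j.1, Finset.mem_filter.2 ⟨j.2, hlt⟩⟩
            omega⟩
        rw [hmember, Nat.add_sub_cancel, pow_succ]
        ring
      · -- l < j
        rw [if_pos hlt,
          Finset.card_insert_of_notMem (fun hmem => h (Finset.mem_of_mem_filter _ hmem)),
          Finset.erase_eq_of_notMem (s := A.filter (fun m => m < l)) (a := j.1)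
            (fun hmem => (asymm hlt) (Finset.mem_filter.1 hmem).2), pow_succ]
        ring
    · -- both conditions fail
      rw [not_not] at hcj
      have hcj' : monomial (Finsupp.equivFunOnFinite.symm
          (Function.update (Function.update u l (u l - 1)) j.1
            (Function.update u l (u l - 1) j.1 + 1))) (1 : K) ∈ I := by
        refine hsq (Function.update u j.1 (u j.1 + 1)) _ (fun k hk => ?_) ?_ hcj
        · by_cases hk1 : k = j.1
          · subst hk1
            rw [Function.update_self, Function.update_self,
              Function.update_of_ne hne]
          · rw [Function.update_of_ne hk1, Function.update_of_ne hk1,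
              Function.update_of_ne hk]
        · rw [Function.update_of_ne hne.symm, Function.update_self]
          omega
      rw [dif_neg (not_not.2 hcj'), dif_neg (not_not.2 hcj), smul_zero, add_zero]


lemma kz_homotopy (hv : 2 ≤ v l)
    (hsq : ∀ u u' : Fin n → ℕ, (∀ k, k ≠ l → u k ≤ u' k) → 1 ≤ u' l →
      monomial (Finsupp.equivFunOnFinite.symm u) (1:K) ∈ I →
      monomial (Finsupp.equivFunOnFinite.symm u') (1:K) ∈ I)
    (i : ℕ) (x : kzStrand K I v (i+1)) :
    kzD K I v (i+1) (kzS I v l hv (i+1) x) + kzS I v l hv i (kzD K I v i x) = x := by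
  induction x using Finsupp.induction_linear with
  | zero => simp
  | add f g hf hg =>
    simp only [map_add]
    rw [add_add_add_comm, hf, hg]
  | single p c =>
    rw [kzS_single, kzD_single, map_smul, map_smul, ← smul_add,
      kz_homotopy_single I v l hv hsq i p, Finsupp.smul_single, smul_eq_mul, mul_one]

lemma kz_surj0 (hv : 2 ≤ v l) (x : kzStrand K I v 0) :
    kzD K I v 0 (kzS I v l hv 0 x) = x := by
  induction x using Finsupp.induction_linear with
  | zero => simp
  | add f g hf hg => rw [map_add, map_add, hf, hg]
  | single p c =>
    rw [kzS_single, map_smul]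
    obtain ⟨⟨A, u⟩, hP⟩ := p
    obtain ⟨hc, hu, hm⟩ := hP
    dsimp only at hc hu hm
    have hA : A = ∅ := Finset.card_eq_zero.1 hc
    subst hA
    have hul : u l = v l := by have h1 := hu l; simp at h1; omega
    rw [kzSS]
    dsimp only
    rw [dif_neg (Finset.notMem_empty l), kzD_single, kzDD]
    dsimp only
    rw [Finset.attach_insert]
    rw [Finset.sum_insert (by intro hmem; obtain ⟨x, -, -⟩ := Finset.mem_image.1 hmem; exact absurd x.2 (Finset.notMem_empty _)), Finset.attach_empty, Finset.image_empty,
      Finset.sum_empty, add_zero]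
    dsimp only
    have hvv : Function.update (Function.update u l (u l - 1)) l
        (Function.update u l (u l - 1) l + 1) = u := by
      rw [Function.update_self, Function.update_idem,
        show u l - 1 + 1 = u l by omega, Function.update_eq_self]
    simp only [hvv, Finset.erase_insert (Finset.notMem_empty l), Finset.filter_insert,
      if_neg (lt_irrefl l), Finset.filter_empty, Finset.card_empty]
    rw [dif_pos hm]
    simp only [pow_zero, Finsupp.smul_single, smul_eq_mul, mul_one]

lemma kzIdx_finite (j : ℕ) : Finite (KzIdx K I v j) := by
  apply Finite.of_injective (fun p : KzIdx K I v j => p.1.1)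
  intro p q hpq
  apply Subtype.ext
  apply Prod.ext hpq
  funext k
  have h1 := p.2.2.1 k
  have h2 := q.2.2.1 k
  dsimp only at hpq
  rw [hpq] at h1
  by_cases hk : k ∈ (q : Finset (Fin n) × (Fin n → ℕ)).1 <;>
    simp only [hk, if_pos, if_neg, not_false_iff, if_true, if_false] at h1 h2 <;> omega

lemma kzStrand_findim (j : ℕ) : FiniteDimensional K (kzStrand K I v j) := by
  have := kzIdx_finite I v j
  have : Fintype (KzIdx K I v j) := Fintype.ofFinite _
  exact Module.Finite.equiv (Finsupp.linearEquivFunOnFinite K K (KzIdx K I v j)).symm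

end Part2

/-- let `I` be a monomial ideal of `S = k[T₁,...,Tₙ]` and let `F` be a
multigraded free resolution of `R = S/I`, encoded by ranks `c i`, generator
multidegrees `g i` and differentials `d i` whose matrix entries are homogeneous of the
appropriate multidegrees.  For `a ∈ ℕⁿ`, the subcomplex `F_{≤a}` generated by the
basis elements of multidegrees `≤ a` (with induced differentials `d'`) is a free
resolution of `S/I_{≤a}`, where `I_{≤a}` is generated by the elements of `I` of
multidegree `≤ a`.  In particular, if `I` is squarefree then the multigraded Betti
numbers `β_{i,v}^S(R)` (computed via Koszul homology, cf. `kzBetti`) vanish unless `v`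
is squarefree. -/
theorem restricted_resolution (K : Type*) [Field K] (n : ℕ)
    (I : Ideal (MvPolynomial (Fin n) K))
    (hmono : ∀ f ∈ I, ∀ m ∈ f.support, monomial m (1 : K) ∈ I)
    (c : ℕ → ℕ) (g : ∀ i : ℕ, Fin (c i) → (Fin n →₀ ℕ))
    (d : ∀ i : ℕ, (Fin (c (i + 1)) → MvPolynomial (Fin n) K)
        →ₗ[MvPolynomial (Fin n) K] (Fin (c i) → MvPolynomial (Fin n) K))
    (hc0 : c 0 = 1) (hg0 : ∀ j, g 0 j = 0)
    (hhom : ∀ i (l : Fin (c (i + 1))) (j : Fin (c i)),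
      ∀ m ∈ (d i (Pi.single l 1) j).support, m + g i j = g (i + 1) l)
    (hexact : ∀ i, Function.Exact (d (i + 1)) (d i))
    (haug : ∀ y : Fin (c 0) → MvPolynomial (Fin n) K,
      y ∈ LinearMap.range (d 0) ↔ ∀ j, y j ∈ I)
    (a : Fin n →₀ ℕ) :
    -- the restricted differentials of the subcomplex `F_{≤ a}`
    (∀ d' : ∀ i : ℕ, ({j : Fin (c (i + 1)) // g (i + 1) j ≤ a} → MvPolynomial (Fin n) K)
        →ₗ[MvPolynomial (Fin n) K] ({j : Fin (c i) // g i j ≤ a} → MvPolynomial (Fin n) K),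
      (∀ i, d' i = (LinearMap.funLeft (MvPolynomial (Fin n) K) (MvPolynomial (Fin n) K)
            (Subtype.val)).comp
          ((d i).comp (extendZero (MvPolynomial (Fin n) K) (fun j => g (i + 1) j ≤ a)))) →
      -- `F_{≤a}` is a free resolution of `S/I_{≤a}`:
      (∀ i, Function.Exact (d' (i + 1)) (d' i)) ∧
      (∀ y : {j : Fin (c 0) // g 0 j ≤ a} → MvPolynomial (Fin n) K,
        y ∈ LinearMap.range (d' 0) ↔
          ∀ j, y j ∈ Ideal.span {f : MvPolynomial (Fin n) K |
            ∃ v : Fin n →₀ ℕ, v ≤ a ∧ f = monomial v 1 ∧ f ∈ I})) ∧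
    -- in particular, squarefree monomial ideals have squarefree Betti numbers:
    ((∃ G : Set (Fin n →₀ ℕ), (∀ v ∈ G, ∀ i, v i ≤ 1) ∧
        I = Ideal.span ((fun v => monomial v (1 : K)) '' G)) →
      ∀ (i : ℕ) (v : Fin n → ℕ), ¬ (∀ l, v l ≤ 1) → kzBetti K I i v = 0) := by
  constructor
  · -- Part 1
    intro d' hd'
    have happ : ∀ i (x : {j : Fin (c (i+1)) // g (i+1) j ≤ a} → MvPolynomial (Fin n) K)
        (j : {j : Fin (c i) // g i j ≤ a}),
        d' i x j = d i (extendZero (MvPolynomial (Fin n) K)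
          (fun l => g (i+1) l ≤ a) x) j.1 := by
      intro i x j; rw [hd' i]; rfl
    have hext : ∀ i (x : {j : Fin (c (i+1)) // g (i+1) j ≤ a} → MvPolynomial (Fin n) K),
        extendZero (MvPolynomial (Fin n) K) (fun j => g i j ≤ a) (d' i x)
          = d i (extendZero (MvPolynomial (Fin n) K) (fun l => g (i+1) l ≤ a) x) := by
      intro i x; funext j
      by_cases hj : g i j ≤ a
      · rw [extendZero_apply, dif_pos hj, happ i x ⟨j, hj⟩]
      · rw [extendZero_apply, dif_neg hj]
        exact (d_extend_zero (d i) (hhom i) a x hj).symm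
    have hcomm : ∀ i (w : Fin n →₀ ℕ) (x : _),
        mcomp (fun j : {j : Fin (c i) // g i j ≤ a} => g i j.1) w (d' i x)
          = d' i (mcomp (fun j : {j : Fin (c (i+1)) // g (i+1) j ≤ a} => g (i+1) j.1) w x) := by
      intro i w x
      funext j
      have e1 : mcomp (fun j : {j : Fin (c i) // g i j ≤ a} => g i j.1) w (d' i x) j
          = mcomp (g i) w (d i (extendZero (MvPolynomial (Fin n) K)
            (fun l => g (i+1) l ≤ a) x)) j.1 := by
        simp only [mcomp, happ]
      rw [e1, mcomp_comm (g i) (g (i+1)) (d i) (hhom i) w, mcomp_extendZero, ← happ]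
    have hdd : ∀ i (x : _), d' i (d' (i+1) x) = 0 := by
      intro i x
      funext j
      rw [Pi.zero_apply, happ, hext (i+1) x]
      have h0 := (hexact i).apply_apply_eq_zero
        (extendZero (MvPolynomial (Fin n) K) (fun l => g (i+2) l ≤ a) x)
      rw [h0]
      rfl
    have hhomog : ∀ i (w : Fin n →₀ ℕ)
        (y : {j : Fin (c (i+1)) // g (i+1) j ≤ a} → MvPolynomial (Fin n) K),
        d' i y = 0 →
        mcomp (fun j : {j : Fin (c (i+1)) // g (i+1) j ≤ a} => g (i+1) j.1) w y = y →
        ∃ x, d' (i+1) x = y := by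
      intro i w y hy0 hyh
      have hga : ∀ j, y j ≠ 0 → g (i+1) j.1 ≤ a := fun j _ => j.2
      obtain ⟨hdiv1, hdiv2⟩ := mdiv_spec hga hyh
      set y'' := mdiv (fun j : {j : Fin (c (i+1)) // g (i+1) j ≤ a} => g (i+1) j.1)
        w (w ⊓ a) y with hy''
      have hy''0 : d' i y'' = 0 := by
        have h0 : monomial (w - w ⊓ a) (1:K) • d' i y'' = 0 := by
          rw [← map_smul, hdiv1, hy0]
        funext j
        have h1 := congrFun h0 j
        simp only [Pi.smul_apply, smul_eq_mul, Pi.zero_apply] at h1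
        rcases mul_eq_zero.1 h1 with h | h
        · exact absurd h (by simp [monomial_eq_zero])
        · exact h
      have hEy : d i (extendZero (MvPolynomial (Fin n) K)
          (fun l => g (i+1) l ≤ a) y'') = 0 := by
        rw [← hext i y'', hy''0, map_zero]
      obtain ⟨z, hz⟩ := (hexact i _).mp hEy
      have hEh : mcomp (g (i+1)) (w ⊓ a) (extendZero (MvPolynomial (Fin n) K)
          (fun l => g (i+1) l ≤ a) y'')
          = extendZero (MvPolynomial (Fin n) K) (fun l => g (i+1) l ≤ a) y'' := by
        rw [mcomp_extendZero, hdiv2]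
      set z' := mcomp (g (i+2)) (w ⊓ a) z with hzdef
      have hz' : d (i+1) z' = extendZero (MvPolynomial (Fin n) K)
          (fun l => g (i+1) l ≤ a) y'' := by
        rw [hzdef, ← mcomp_comm (g (i+1)) (g (i+2)) (d (i+1)) (hhom (i+1)) (w ⊓ a) z, hz, hEh]
      have hzez : extendZero (MvPolynomial (Fin n) K) (fun l => g (i+2) l ≤ a)
          (fun j => z' j.1) = z' := by
        funext l
        by_cases hl : g (i+2) l ≤ a
        · rw [extendZero_apply, dif_pos hl]
        · rw [extendZero_apply, dif_neg hl]
          by_contra hne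
          have h2 : g (i+2) l ≤ w ⊓ a := mcomp_ne_zero_le (fun h => hne h.symm)
          exact hl (h2.trans inf_le_right)
      refine ⟨monomial (w - w ⊓ a) (1:K) • (fun j => z' j.1), ?_⟩
      rw [map_smul]
      have hfin : d' (i+1) (fun j => z' j.1) = y'' := by
        funext j
        rw [happ (i+1), hzez, hz', extendZero_apply, dif_pos j.2]
      rw [hfin, hdiv1]
    have hsurj : ∀ i (y : _), d' i y = 0 → y ∈ Set.range (d' (i+1)) := by
      intro i y hy
      letI : Fintype {j : Fin (c (i+1)) // g (i+1) j ≤ a} := Fintype.ofFinite _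
      have hdecomp := mcomp_decompose
        (fun j : {j : Fin (c (i+1)) // g (i+1) j ≤ a} => g (i+1) j.1) y
      have hmem : y ∈ LinearMap.range (d' (i+1)) := by
        rw [hdecomp]
        refine Submodule.sum_mem _ fun w _ => ?_
        obtain ⟨x, hx⟩ := hhomog i w
          (mcomp (fun j : {j : Fin (c (i+1)) // g (i+1) j ≤ a} => g (i+1) j.1) w y)
          (by rw [← hcomm i w y, hy, mcomp_zero]) (mcomp_idem _ _ _)
        exact ⟨x, hx⟩
      exact hmem
    refine ⟨fun i y => ⟨fun h => hsurj i y h, ?_⟩, ?_⟩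
    · rintro ⟨x, rfl⟩
      exact hdd i x
    · intro y
      constructor
      · rintro ⟨x, rfl⟩
        intro j
        letI : Fintype {j : Fin (c 1) // g 1 j ≤ a} := Fintype.ofFinite _
        have hdecomp := mcomp_decompose
          (fun l : {l : Fin (c 1) // g 1 l ≤ a} => g 1 l.1) x
        rw [hdecomp, map_sum, Finset.sum_apply]
        refine Ideal.sum_mem _ fun w _ => ?_
        set X := mcomp (fun l : {l : Fin (c 1) // g 1 l ≤ a} => g 1 l.1) w x with hX
        have hXh : mcomp (fun l : {l : Fin (c 1) // g 1 l ≤ a} => g 1 l.1) w X = X :=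
          mcomp_idem _ _ _
        obtain ⟨hdiv1, hdiv2⟩ := mdiv_spec (fun l _ => l.2) hXh
        set x'' := mdiv (fun l : {l : Fin (c 1) // g 1 l ≤ a} => g 1 l.1) w (w ⊓ a) X
          with hx''def
        have hyx : d' 0 X = monomial (w - w ⊓ a) (1:K) • d' 0 x'' := by
          rw [← map_smul, hdiv1]
        have hIm : ∀ l : Fin (c 0), (d 0 (extendZero (MvPolynomial (Fin n) K)
            (fun l => g 1 l ≤ a) x'')) l ∈ I :=
          (haug _).mp ⟨_, rfl⟩
        have hj' : d' 0 x'' j ∈ I := by rw [happ 0]; exact hIm j.1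
        have hx''h : mcomp (fun j : {j : Fin (c 0) // g 0 j ≤ a} => g 0 j.1) (w ⊓ a)
            (d' 0 x'') = d' 0 x'' := by
          rw [hcomm 0, hdiv2]
        have hg : g 0 j.1 = 0 := hg0 j.1
        have hmon : d' 0 x'' j = monomial (w ⊓ a)
            (MvPolynomial.coeff (w ⊓ a) (d' 0 x'' j)) := by
          conv_lhs => rw [← hx''h]
          simp [mcomp, hg]
        rw [hyx, Pi.smul_apply, smul_eq_mul]
        by_cases hcz : MvPolynomial.coeff (w ⊓ a) (d' 0 x'' j) = 0
        · rw [hmon, hcz]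
          simp
        · have hIsp : monomial (w ⊓ a) (1:K) ∈ I := by
            have h2 := hj'
            rw [hmon] at h2
            have h3 := I.mul_mem_left (C (MvPolynomial.coeff (w ⊓ a) (d' 0 x'' j))⁻¹) h2
            rwa [C_mul_monomial, inv_mul_cancel₀ hcz] at h3
          have hgen : monomial (w ⊓ a) (1:K) ∈ Ideal.span {f : MvPolynomial (Fin n) K |
              ∃ v : Fin n →₀ ℕ, v ≤ a ∧ f = monomial v 1 ∧ f ∈ I} :=
            Ideal.subset_span ⟨w ⊓ a, inf_le_right, rfl, hIsp⟩
          rw [hmon]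
          have hre : monomial (w - w ⊓ a) (1:K) * monomial (w ⊓ a)
              (MvPolynomial.coeff (w ⊓ a) (d' 0 x'' j))
              = monomial (w - w ⊓ a) (MvPolynomial.coeff (w ⊓ a) (d' 0 x'' j))
                * monomial (w ⊓ a) 1 := by
            rw [monomial_mul, monomial_mul, one_mul, mul_one]
          rw [hre]
          exact Ideal.mul_mem_left _ _ hgen
      · intro hyJ
        have hj₀ : (0 : ℕ) < c 0 := by rw [hc0]; omega
        have hsub : ∀ (j j' : {j : Fin (c 0) // g 0 j ≤ a}), j = j' := by
          intro j j'
          apply Subtype.ext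
          apply Fin.ext
          have := j.1.2
          have := j'.1.2
          omega
        set j₀ : {j : Fin (c 0) // g 0 j ≤ a} :=
          ⟨⟨0, hj₀⟩, by rw [hg0]; exact zero_le⟩ with hj₀def
        set ψ : MvPolynomial (Fin n) K →ₗ[MvPolynomial (Fin n) K]
            ({j : Fin (c 0) // g 0 j ≤ a} → MvPolynomial (Fin n) K) :=
          LinearMap.pi (fun _ => LinearMap.id) with hψ
        have hyψ : y = ψ (y j₀) := funext fun j => by rw [hsub j j₀]; rfl
        rw [hyψ]
        have hJle : Ideal.span {f : MvPolynomial (Fin n) K |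
            ∃ v : Fin n →₀ ℕ, v ≤ a ∧ f = monomial v 1 ∧ f ∈ I}
            ≤ Submodule.comap ψ (LinearMap.range (d' 0)) := by
          rw [Ideal.span_le]
          rintro f ⟨v, hva, rfl, hfI⟩
          obtain ⟨x, hx⟩ := (haug (fun _ => monomial v 1)).mpr (fun _ => hfI)
          have hxv : d 0 (mcomp (g 1) v x) = fun _ => monomial v (1:K) := by
            rw [← mcomp_comm (g 0) (g 1) (d 0) (hhom 0) v x, hx]
            funext l
            simp [mcomp, hg0 l, coeff_monomial]
          have hsup : extendZero (MvPolynomial (Fin n) K) (fun l => g 1 l ≤ a)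
              (fun l => mcomp (g 1) v x l.1) = mcomp (g 1) v x := by
            funext l
            by_cases hl : g 1 l ≤ a
            · rw [extendZero_apply, dif_pos hl]
            · rw [extendZero_apply, dif_neg hl]
              by_contra hne
              have h2 : g 1 l ≤ v := mcomp_ne_zero_le (fun h => hne h.symm)
              exact hl (h2.trans hva)
          refine ⟨fun l => mcomp (g 1) v x l.1, ?_⟩
          funext j
          rw [happ 0, hsup, hxv]
          rfl
        exact hJle (hyJ j₀)
  · -- Part 2
    rintro ⟨G, hGsq, hGspan⟩ i v hv
    obtain ⟨l, hl⟩ : ∃ l, 2 ≤ v l := by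
      push_neg at hv
      obtain ⟨l, hl⟩ := hv
      exact ⟨l, by omega⟩
    have hsq : ∀ u u' : Fin n → ℕ, (∀ k, k ≠ l → u k ≤ u' k) → 1 ≤ u' l →
        monomial (Finsupp.equivFunOnFinite.symm u) (1:K) ∈ I →
        monomial (Finsupp.equivFunOnFinite.symm u') (1:K) ∈ I := by
      intro u u' hk hl' hu
      rw [hGspan, mem_ideal_span_monomial_image] at hu ⊢
      intro xi hxi
      rw [support_monomial, if_neg one_ne_zero, Finset.mem_singleton] at hxi
      subst hxi
      obtain ⟨s, hsG, hsle⟩ := hu (Finsupp.equivFunOnFinite.symm u) (by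
        rw [support_monomial, if_neg one_ne_zero]; exact Finset.mem_singleton_self _)
      refine ⟨s, hsG, ?_⟩
      intro k
      rw [Finsupp.coe_equivFunOnFinite_symm]
      by_cases hkl : k = l
      · subst hkl
        exact le_trans (hGsq s hsG k) hl'
      · have h2 := Finsupp.le_def.1 hsle k
        rw [Finsupp.coe_equivFunOnFinite_symm] at h2
        exact le_trans h2 (hk k hkl)
    match i with
    | 0 =>
      have hsurjD : LinearMap.range (kzD K I v 0) = ⊤ :=
        LinearMap.range_eq_top.2 (fun x => ⟨kzS I v l hl 0 x, kz_surj0 I v l hl x⟩)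
      show Module.finrank K (kzStrand K I v 0) -
        Module.finrank K (LinearMap.range (kzD K I v 0)) = 0
      rw [hsurjD, finrank_top]
      exact Nat.sub_self _
    | (i+1) =>
      have hle : LinearMap.ker (kzD K I v i) ≤ LinearMap.range (kzD K I v (i+1)) := by
        intro x hx
        have h1 := kz_homotopy I v l hl hsq i x
        rw [LinearMap.mem_ker.1 hx, map_zero, add_zero] at h1
        exact ⟨kzS I v l hl (i+1) x, h1⟩
      have := kzStrand_findim (K := K) I v (i+1)
      show Module.finrank K (LinearMap.ker (kzD K I v i)) -
        Module.finrank K (LinearMap.range (kzD K I v (i+1))) = 0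
      exact Nat.sub_eq_zero_of_le (Submodule.finrank_mono hle)
end
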